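/- arXiv:0810.2060 — 11 statements merged into one kernel-verified Lean document; each statement's English description precedes it below -/
import Mathlib

section
/- Let G be a second-countable profinite group. Then the virtual center VZ(G) is a closed subset of G if and only if there exists an open subgroup U of G such that VZ(U) = Z(U), i.e., such that every element u of U whose centralizer in U is open in U lies in the center of U. -/
/-!
If `U` is an open subgroup with `VZ(U) = Z(U)`, then `VZ(G) ∩ U = C_G(U) ∩ U` is closed, and a
subgroup whose intersection with an open subgroup is closed is itself closed.

Conversely, choose open subgroups `N₀ ⊇ N₁ ⊇ ⋯` forming a basis at `1`. Every element of `VZ(G)`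
centralizes some `Nₙ`, so the compact group `VZ(G)` is a countable union of the closed subgroups
`VZ(G) ∩ C_G(Nₙ)`; by Baire one of them is open in `VZ(G)`, i.e. `VZ(G) ∩ W ⊆ C_G(Nₙ)` for an
open subgroup `W`. Then `U = W ∩ Nₙ` works, since `VZ(U) = VZ(G) ∩ U` for open `U`.
-/

open Filter Topology

namespace Subgroup

theorem centralizer_singleton_subgroupOf {G : Type*} [Group G] {U : Subgroup G} (u : U) :
    centralizer {u} = (centralizer {(u : G)}).subgroupOf U := by
  ext x
  simp only [mem_subgroupOf, mem_centralizer_singleton_iff, Subtype.ext_iff, coe_mul]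

variable {G : Type*} [Group G] [TopologicalSpace G] [IsTopologicalGroup G]

variable (G) in
def virtualCenter : Subgroup G where
  carrier := {g | IsOpen (centralizer {g} : Set G)}
  one_mem' := isOpen_mono (H₁ := ⊤)
    (fun x _ ↦ mem_centralizer_singleton_iff.2 (Commute.one_right x)) isOpen_univ
  mul_mem' {a b} ha hb := isOpen_mono (H₁ := centralizer {a} ⊓ centralizer {b})
    (fun _ hx ↦ mem_centralizer_singleton_iff.2 <|
      Commute.mul_right (mem_centralizer_singleton_iff.1 hx.1)
        (mem_centralizer_singleton_iff.1 hx.2))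
    (ha.inter hb)
  inv_mem' ha := isOpen_mono (fun _ hx ↦ mem_centralizer_singleton_iff.2
    (Commute.inv_right (mem_centralizer_singleton_iff.1 hx))) ha

theorem mem_virtualCenter {g : G} :
    g ∈ virtualCenter G ↔ IsOpen (centralizer {g} : Set G) :=
  Iff.rfl

theorem mem_virtualCenter_of_mem_centralizer {N : Subgroup G} (hN : IsOpen (N : Set G)) {g : G}
    (hg : g ∈ centralizer (N : Set G)) : g ∈ virtualCenter G :=
  isOpen_mono (fun x hx ↦ mem_centralizer_singleton_iff.2 (hg x hx)) hN

theorem isOpen_subgroupOf_iff {H U : Subgroup G} (hU : IsOpen (U : Set G)) :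
    IsOpen (H.subgroupOf U : Set U) ↔ IsOpen (H : Set G) := by
  refine ⟨fun h ↦ isOpen_mono (H₁ := U ⊓ H) inf_le_right ?_,
    fun h ↦ h.preimage continuous_subtype_val⟩
  have := hU.isOpenMap_subtype_val _ h
  rwa [← coe_subtype, ← coe_map, subgroupOf_map_subtype, inf_comm] at this

theorem mem_virtualCenter_iff_of_isOpen {U : Subgroup G} (hU : IsOpen (U : Set G)) {u : U} :
    u ∈ virtualCenter U ↔ (u : G) ∈ virtualCenter G := by
  rw [mem_virtualCenter, mem_virtualCenter, centralizer_singleton_subgroupOf,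
    isOpen_subgroupOf_iff hU]

theorem isClosed_of_isClosed_inf {H U : Subgroup G} (hU : IsOpen (U : Set G))
    (hHU : IsClosed ((H ⊓ U : Subgroup G) : Set G)) : IsClosed (H : Set G) := by
  -- For `x ∈ closure H` pick `h ∈ H ∩ xU`; then `x⁻¹h ∈ closure H ∩ U ⊆ closure (H ∩ U) = H ∩ U`.
  refine closure_subset_iff_isClosed.1 fun x hx ↦ ?_
  have hx' : x ∈ H.topologicalClosure := hx
  obtain ⟨h, hxh, hh⟩ := mem_closure_iff.1 hx _ (hU.smul x)
    (Set.mem_smul_set_iff_inv_smul_mem.2 (by simp))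
  have hu : x⁻¹ * h ∈ H ⊓ U := hHU.closure_subset <| hU.closure_inter
    ⟨mul_mem (inv_mem hx') (H.le_topologicalClosure hh), Set.mem_smul_set_iff_inv_smul_mem.1 hxh⟩
  simpa using mul_mem hh (inv_mem hu.1)

theorem virtualCenter_inf_eq_centralizer_inf {U : Subgroup G} (hU : IsOpen (U : Set G))
    (h : virtualCenter U ≤ center U) : virtualCenter G ⊓ U = centralizer (U : Set G) ⊓ U := by
  ext g
  refine ⟨fun ⟨hg, hgU⟩ ↦ ⟨fun x hx ↦ ?_, hgU⟩,
    fun ⟨hg, hgU⟩ ↦ ⟨mem_virtualCenter_of_mem_centralizer hU hg, hgU⟩⟩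
  have := mem_center_iff.1 (h ((mem_virtualCenter_iff_of_isOpen hU (u := ⟨g, hgU⟩)).2 hg)) ⟨x, hx⟩
  exact congrArg Subtype.val this

theorem isClosed_virtualCenter_of_virtualCenter_le_center [T2Space G] {U : Subgroup G}
    (hU : IsOpen (U : Set G)) (h : virtualCenter U ≤ center U) :
    IsClosed (virtualCenter G : Set G) := by
  refine isClosed_of_isClosed_inf hU ?_
  rw [virtualCenter_inf_eq_centralizer_inf hU h, coe_inf]
  exact (Set.isClosed_centralizer _).inter (U.isClosed_of_isOpen hU)

theorem exists_isOpen_of_iUnion_eq_univ {H : Type*} [Group H] [TopologicalSpace H]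
    [SeparatelyContinuousMul H] [BaireSpace H] {ι : Type*} [Countable ι] (K : ι → Subgroup H)
    (hK : ∀ i, IsClosed (K i : Set H)) (hcover : ⋃ i, (K i : Set H) = Set.univ) :
    ∃ i, IsOpen (K i : Set H) :=
  let ⟨i, _, hx⟩ := nonempty_interior_of_iUnion_of_closed hK hcover
  ⟨i, isOpen_of_mem_nhds _ (mem_interior_iff_mem_nhds.1 hx)⟩

section Profinite

variable [CompactSpace G] [TotallyDisconnectedSpace G]

theorem nhds_one_hasBasis_openSubgroup :
    (𝓝 (1 : G)).HasBasis (fun _ : OpenSubgroup G ↦ True) (fun N ↦ (N : Set G)) := by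
  refine ⟨fun V ↦ ⟨fun hV ↦ ?_, fun ⟨N, _, hN⟩ ↦ mem_of_superset N.mem_nhds_one hN⟩⟩
  obtain ⟨W, hWV, hWo, h1W⟩ := mem_nhds_iff.1 hV
  obtain ⟨N, hN⟩ := ProfiniteGrp.exist_openNormalSubgroup_sub_open_nhds_of_one hWo h1W
  exact ⟨N.toOpenSubgroup, trivial, hN.trans hWV⟩

theorem exists_virtualCenter_inf_le_centralizer [T2Space G] [FirstCountableTopology G]
    (h : IsClosed (virtualCenter G : Set G)) :
    ∃ N W : OpenSubgroup G, virtualCenter G ⊓ W ≤ centralizer (N : Set G) := by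
  obtain ⟨N, -, hN⟩ := nhds_one_hasBasis_openSubgroup.exists_antitone_subbasis (f := 𝓝 (1 : G))
  have : CompactSpace (virtualCenter G) := isCompact_iff_compactSpace.1 h.isCompact
  have hcover : ⋃ n, ((centralizer (N n : Set G)).subgroupOf (virtualCenter G) :
      Set (virtualCenter G)) = Set.univ := by
    refine Set.eq_univ_of_forall fun g ↦ Set.mem_iUnion.2 ?_
    obtain ⟨n, hn⟩ := hN.mem_iff.1 (g.2.mem_nhds (one_mem _))
    exact ⟨n, fun x hx ↦ mem_centralizer_singleton_iff.1 (hn hx)⟩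
  obtain ⟨n, hn⟩ := exists_isOpen_of_iUnion_eq_univ _
    (fun n ↦ (Set.isClosed_centralizer _).preimage continuous_subtype_val) hcover
  obtain ⟨V, hVo, hV⟩ := isOpen_induced_iff.1 hn
  have h1V : (1 : G) ∈ V := by
    change (1 : virtualCenter G) ∈ Subtype.val ⁻¹' V
    rw [hV]
    exact one_mem _
  obtain ⟨W, -, hW⟩ := nhds_one_hasBasis_openSubgroup.mem_iff.1 (hVo.mem_nhds h1V)
  refine ⟨N n, W, fun g ⟨hg, hgW⟩ ↦ ?_⟩
  have : (⟨g, hg⟩ : virtualCenter G) ∈ Subtype.val ⁻¹' V := hW hgW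
  rwa [hV] at this

end Profinite

theorem virtualCenter_le_center_of_virtualCenter_inf_le_centralizer {N W : Subgroup G}
    (hN : IsOpen (N : Set G)) (hW : IsOpen (W : Set G))
    (h : virtualCenter G ⊓ W ≤ centralizer (N : Set G)) :
    virtualCenter (W ⊓ N : Subgroup G) ≤ center (W ⊓ N : Subgroup G) := by
  intro u hu
  have hu' : (u : G) ∈ centralizer (N : Set G) :=
    h ⟨(mem_virtualCenter_iff_of_isOpen (hW.inter hN)).1 hu, u.2.1⟩
  exact mem_center_iff.2 fun x ↦ Subtype.ext (hu' x x.2.2)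

end Subgroup

/-- Proposition 2.2: For a second-countable profinite group `G`, the virtual center
`VZ(G) = {g : centralizer of g is open}` is closed iff there is an open subgroup `U`
with `VZ(U) = Z(U)`. -/
theorem stmt_0 {G : Type*} [Group G] [TopologicalSpace G] [IsTopologicalGroup G]
    [CompactSpace G] [T2Space G] [TotallyDisconnectedSpace G]
    [SecondCountableTopology G] :
    IsClosed {g : G | IsOpen ((Subgroup.centralizer {g} : Subgroup G) : Set G)} ↔
      ∃ U : Subgroup G, IsOpen (U : Set G) ∧
        ∀ u : U, IsOpen ((Subgroup.centralizer {u} : Subgroup U) : Set U) →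
          u ∈ Subgroup.center U := by
  refine ⟨fun h ↦ ?_, fun ⟨U, hU, hUc⟩ ↦
    Subgroup.isClosed_virtualCenter_of_virtualCenter_le_center hU hUc⟩
  obtain ⟨N, W, hNW⟩ := Subgroup.exists_virtualCenter_inf_le_centralizer h
  exact ⟨W ⊓ N, W.isOpen.inter N.isOpen, fun u hu ↦
    Subgroup.virtualCenter_le_center_of_virtualCenter_inf_le_centralizer N.isOpen W.isOpen hNW hu⟩
end

section
/- Let L be a topological group with trivial virtual center, i.e., VZ(L) = {1}. Then every continuous group automorphism φ of L that fixes pointwise some open subgroup of L is the identity automorphism. -/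
lemma commute_map_mul_inv_of_fixed {G : Type*} [Group G] (φ : G →* G) {x u : G}
    (hu : φ u = u) (hconj : φ (x⁻¹ * u * x) = x⁻¹ * u * x) :
    Commute u (φ x * x⁻¹) := by
  simp only [map_mul, map_inv, hu] at hconj
  calc u * (φ x * x⁻¹) = φ x * ((φ x)⁻¹ * u * φ x) * x⁻¹ := by group
    _ = φ x * x⁻¹ * u := by rw [hconj]; group

lemma isOpen_comap_conj {G : Type*} [Group G] [TopologicalSpace G] [IsTopologicalGroup G]
    {U : Subgroup G} (hU : IsOpen (U : Set G)) (x : G) :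
    IsOpen (U.comap (MulAut.conj x).toMonoidHom : Set G) :=
  hU.preimage (by change Continuous fun v => x * v * x⁻¹; fun_prop)

/-- The element `φ x * x⁻¹` centralizes the open subgroup `U ⊓ x U x⁻¹`. -/
lemma isOpen_centralizer_map_mul_inv {G : Type*} [Group G] [TopologicalSpace G]
    [IsTopologicalGroup G] (φ : G →* G) {U : Subgroup G} (hU : IsOpen (U : Set G))
    (hfix : ∀ u ∈ U, φ u = u) (x : G) :
    IsOpen (Subgroup.centralizer {φ x * x⁻¹} : Set G) := by
  let V := U ⊓ U.comap (MulAut.conj x⁻¹).toMonoidHom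
  have hV : IsOpen (V : Set G) := hU.inter (isOpen_comap_conj hU x⁻¹)
  refine Subgroup.isOpen_mono (fun v hv => ?_) hV
  obtain ⟨hvU, hvconj⟩ := Subgroup.mem_inf.mp hv
  have hvconj : x⁻¹ * v * x ∈ U := by simpa [MulAut.conj_apply] using hvconj
  rw [Subgroup.mem_centralizer_singleton_iff]
  exact commute_map_mul_inv_of_fixed φ (hfix v hvU) (hfix _ hvconj)

theorem stmt_1_general {L : Type*} [Group L] [TopologicalSpace L] [IsTopologicalGroup L]
    (hVZ : ∀ g : L, IsOpen ((Subgroup.centralizer {g} : Subgroup L) : Set L) → g = 1)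
    (φ : L ≃* L)
    (hfix : ∃ U : Subgroup L, IsOpen (U : Set L) ∧ ∀ u ∈ U, φ u = u) :
    ∀ x : L, φ x = x := by
  obtain ⟨U, hU, hUfix⟩ := hfix
  intro x
  exact mul_inv_eq_one.mp <| hVZ _ <|
    isOpen_centralizer_map_mul_inv φ.toMonoidHom hU hUfix x

/-- Proposition 2.5: If a topological group `L` has trivial virtual center, then every
(bi)continuous automorphism of `L` fixing some open subgroup pointwise is the identity. -/
theorem stmt_1 {L : Type*} [Group L] [TopologicalSpace L] [IsTopologicalGroup L]
    (hVZ : ∀ g : L, IsOpen ((Subgroup.centralizer {g} : Subgroup L) : Set L) → g = 1)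
    (φ : L ≃* L) (hφ : Continuous φ) (hφ' : Continuous φ.symm)
    (hfix : ∃ U : Subgroup L, IsOpen (U : Set L) ∧ ∀ u ∈ U, φ u = u) :
    ∀ x : L, φ x = x :=
  stmt_1_general hVZ φ hfix
end

section
/- Let L be a topological group with trivial virtual center VZ(L) = {1}. Let U and V be open subgroups of L and let φ : U → V be a topological group isomorphism such that φ restricts to the identity on some open subgroup W of L with W ⊆ U ∩ V. Then U = V and φ is the identity map of U. -/
/-!
For `u ∈ U`, applying `φ` to `u w u⁻¹` with `w` and `u w u⁻¹` both in `W` gives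
`φ(u) w φ(u)⁻¹ = u w u⁻¹`, so `u⁻¹ φ(u)` centralizes the open subgroup `W ∩ u⁻¹ W u`.
Its centralizer is then open, so `u⁻¹ φ(u) = 1` by triviality of the virtual center.
Hence `φ` is the identity on elements, and surjectivity of `φ` forces `U = V`.
-/

namespace Subgroup

variable {G : Type*} [Group G]

theorem inv_mul_apply_mem_centralizer {U W : Subgroup G} (hWU : W ≤ U) (f : U →* G)
    (hf : ∀ (w : G) (hw : w ∈ W), f ⟨w, hWU hw⟩ = w) (u : U) :
    W ⊓ W.comap (MulAut.conj (u : G)).toMonoidHom ≤ centralizer {(u : G)⁻¹ * f u} := by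
  rintro w ⟨hw, hconj : (u : G) * w * (u : G)⁻¹ ∈ W⟩
  have hfconj : f u * w * (f u)⁻¹ = u * w * (u : G)⁻¹ := by
    have h := hf _ hconj
    rwa [show (⟨(u : G) * w * (u : G)⁻¹, hWU hconj⟩ : U) = u * ⟨w, hWU hw⟩ * u⁻¹ from rfl,
      map_mul, map_mul, map_inv, hf w hw] at h
  rw [mem_centralizer_singleton_iff]
  calc w * ((u : G)⁻¹ * f u)
      = (u : G)⁻¹ * ((u : G) * w * (u : G)⁻¹) * f u := by group
    _ = (u : G)⁻¹ * (f u * w * (f u)⁻¹) * f u := by rw [hfconj]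
    _ = (u : G)⁻¹ * f u * w := by group

theorem eq_of_mulEquiv_coe_apply {U V : Subgroup G} (φ : U ≃* V)
    (hφ : ∀ u : U, (φ u : G) = u) : U = V := by
  refine le_antisymm (fun x hx ↦ ?_) fun x hx ↦ ?_
  · simpa only [hφ] using (φ ⟨x, hx⟩).2
  · simpa only [← hφ, φ.apply_symm_apply] using (φ.symm ⟨x, hx⟩).2

end Subgroup

section TopologicalGroup

variable {L : Type*} [Group L] [TopologicalSpace L] [IsTopologicalGroup L]

theorem Subgroup.isOpen_inf_comap_conj {W : Subgroup L} (hW : IsOpen (W : Set L)) (g : L) :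
    IsOpen ((W ⊓ W.comap (MulAut.conj g).toMonoidHom : Subgroup L) : Set L) :=
  hW.inter (hW.preimage (by fun_prop : Continuous fun x ↦ g * x * g⁻¹))

theorem coe_apply_eq_of_eqOn_openSubgroup
    (hVZ : ∀ g : L, IsOpen ((Subgroup.centralizer {g} : Subgroup L) : Set L) → g = 1)
    {U W : Subgroup L} (hW : IsOpen (W : Set L)) (hWU : W ≤ U) (f : U →* L)
    (hf : ∀ (w : L) (hw : w ∈ W), f ⟨w, hWU hw⟩ = w) (u : U) : f u = u := by
  have hopen := Subgroup.isOpen_mono (Subgroup.inv_mul_apply_mem_centralizer hWU f hf u)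
    (Subgroup.isOpen_inf_comap_conj hW u)
  exact (inv_mul_eq_one.mp (hVZ _ hopen)).symm

end TopologicalGroup

theorem stmt_2_general {L : Type*} [Group L] [TopologicalSpace L] [IsTopologicalGroup L]
    (hVZ : ∀ g : L, IsOpen ((Subgroup.centralizer {g} : Subgroup L) : Set L) → g = 1)
    (U V W : Subgroup L)
    (hW : IsOpen (W : Set L)) (hWU : W ≤ U)
    (φ : U ≃* V)
    (hid : ∀ (w : L) (hw : w ∈ W), (φ ⟨w, hWU hw⟩ : L) = w) :
    U = V ∧ ∀ u : U, (φ u : L) = (u : L) := by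
  have hφ : ∀ u : U, (φ u : L) = u :=
    coe_apply_eq_of_eqOn_openSubgroup hVZ hW hWU (V.subtype.comp φ.toMonoidHom) hid
  exact ⟨Subgroup.eq_of_mulEquiv_coe_apply φ hφ, hφ⟩

/-- Proposition 2.6: Let `L` be a topological group with trivial virtual center, and let
`φ : U → V` be a topological isomorphism between open subgroups of `L` restricting to the
identity on an open subgroup `W ⊆ U ⊓ V`. Then `U = V` and `φ` is the identity. -/
theorem stmt_2 {L : Type*} [Group L] [TopologicalSpace L] [IsTopologicalGroup L]
    (hVZ : ∀ g : L, IsOpen ((Subgroup.centralizer {g} : Subgroup L) : Set L) → g = 1)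
    (U V W : Subgroup L) (hU : IsOpen (U : Set L)) (hV : IsOpen (V : Set L))
    (hW : IsOpen (W : Set L)) (hWU : W ≤ U) (hWV : W ≤ V)
    (φ : U ≃* V) (hφ : Continuous φ) (hφ' : Continuous φ.symm)
    (hid : ∀ (w : L) (hw : w ∈ W), (φ ⟨w, hWU hw⟩ : L) = w) :
    U = V ∧ ∀ u : U, (φ u : L) = (u : L) :=
  stmt_2_general hVZ U V W hW hWU φ hid
end

section
/- Let L be a topological group that is Hausdorff, locally compact, and totally disconnected, topologically simple, and compactly generated. Then L is second countable (its topology has a countable base). -/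
/-!
By van Dantzig's theorem `L` has a compact open subgroup `H` avoiding any given `x ≠ 1`. Its
normal core is a closed normal subgroup missing `x`, hence trivial by simplicity, so `L` acts
faithfully on `L ⧸ H`. Compact generation makes `L` σ-compact, so the discrete quotient `L ⧸ H`
is countable; the faithful action then embeds the compact group `H` into the second countable
space `L ⧸ H → L ⧸ H`, and `L` is a countable union of open translates of `H`.
-/

open Set Pointwise Topology

theorem Subgroup.closure_subset_of_mul_subset {G : Type*} [Group G] {V W : Set G}
    (hV : (1 : G) ∈ V) (hW : V * W ⊆ V) (hWinv : V * W⁻¹ ⊆ V) :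
    (Subgroup.closure W : Set G) ⊆ V := by
  suffices h : ∀ g ∈ Subgroup.closure W, ∀ v ∈ V, v * g ∈ V from
    fun g hg => by simpa using h g hg 1 hV
  intro g hg
  induction hg using Subgroup.closure_induction'' with
  | mem w hw => exact fun v hv => hW (mul_mem_mul hv hw)
  | inv_mem w hw => exact fun v hv => hWinv (mul_mem_mul hv (inv_mem_inv.2 hw))
  | one => simp
  | mul x y _ _ hx hy => exact fun v hv => mul_assoc v x y ▸ hy _ (hx v hv)

/-- Van Dantzig's theorem. -/
theorem exists_isOpen_isCompact_subgroup_subset {G : Type*} [Group G] [TopologicalSpace G]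
    [IsTopologicalGroup G] [T2Space G] [LocallyCompactSpace G] [TotallyDisconnectedSpace G]
    {N : Set G} (hN : N ∈ 𝓝 1) :
    ∃ H : Subgroup G, IsOpen (H : Set G) ∧ IsCompact (H : Set G) ∧ (H : Set G) ⊆ N := by
  obtain ⟨s, hs, hsN, hscomp⟩ := local_compact_nhds hN
  obtain ⟨V, hVclopen, hV1, hVs⟩ := loc_compact_Haus_tot_disc_of_zero_dim.mem_nhds_iff.mp hs
  have hVcomp : IsCompact V := hscomp.of_isClosed_subset hVclopen.1 hVs
  obtain ⟨U, hU, hVU⟩ := compact_open_separated_mul_right hVcomp hVclopen.2 subset_rfl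
  set W := interior (U ∩ U⁻¹)
  have hW : W ∈ 𝓝 1 := interior_mem_nhds.2 (Filter.inter_mem hU (inv_mem_nhds_one G hU))
  have hHopen : IsOpen (Subgroup.closure W : Set G) :=
    Subgroup.isOpen_of_mem_nhds _ (Filter.mem_of_superset hW Subgroup.subset_closure)
  have hHV : (Subgroup.closure W : Set G) ⊆ V := by
    refine Subgroup.closure_subset_of_mul_subset hV1 ((mul_subset_mul_left ?_).trans hVU)
      ((mul_subset_mul_left ?_).trans hVU)
    · exact interior_subset.trans inter_subset_left
    · exact fun g hg => by simpa using (interior_subset hg).2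
  exact ⟨_, hHopen, hVcomp.of_isClosed_subset (Subgroup.isClosed_of_isOpen _ hHopen) hHV,
    hHV.trans (hVs.trans hsN)⟩

theorem IsCompact.pow {M : Type*} [Monoid M] [TopologicalSpace M] [ContinuousMul M]
    {s : Set M} (hs : IsCompact s) : ∀ n : ℕ, IsCompact (s ^ n)
  | 0 => by simp
  | n + 1 => by rw [pow_succ]; exact (hs.pow n).mul hs

theorem Submonoid.closure_subset_iUnion_pow {M : Type*} [Monoid M] (s : Set M) :
    (Submonoid.closure s : Set M) ⊆ ⋃ n : ℕ, s ^ n := fun x hx => by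
  induction hx using Submonoid.closure_induction with
  | mem x hx => exact mem_iUnion.2 ⟨1, by simp [hx]⟩
  | one => exact mem_iUnion.2 ⟨0, by simp⟩
  | mul x y _ _ hx hy =>
    obtain ⟨m, hm⟩ := mem_iUnion.1 hx
    obtain ⟨n, hn⟩ := mem_iUnion.1 hy
    exact mem_iUnion.2 ⟨m + n, pow_add s m n ▸ mul_mem_mul hm hn⟩

theorem sigmaCompactSpace_of_closure_eq_top {G : Type*} [Group G] [TopologicalSpace G]
    [IsTopologicalGroup G] {K : Set G} (hK : IsCompact K) (hKG : Subgroup.closure K = ⊤) :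
    SigmaCompactSpace G := by
  refine ⟨⟨fun n => (K ∪ K⁻¹) ^ n, fun n => (hK.union hK.inv).pow n, ?_⟩⟩
  refine eq_univ_of_forall fun g => Submonoid.closure_subset_iUnion_pow _ ?_
  rw [← Subgroup.closure_toSubmonoid, hKG]
  exact Subgroup.mem_top g

theorem QuotientGroup.countable_of_isOpen {G : Type*} [Group G] [TopologicalSpace G]
    [IsTopologicalGroup G] [SigmaCompactSpace G] {H : Subgroup G} (hH : IsOpen (H : Set G)) :
    Countable (G ⧸ H) :=
  have := QuotientGroup.discreteTopology hH
  have := LindelofSpace.of_continuous_surjective QuotientGroup.continuous_mk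
    (QuotientGroup.mk_surjective (s := H))
  countable_of_Lindelof_of_discrete

theorem secondCountableTopology_of_normalCore_eq_bot {G : Type*} [Group G] [TopologicalSpace G]
    [IsTopologicalGroup G] {H : Subgroup G} [Countable (G ⧸ H)] (hopen : IsOpen (H : Set G))
    (hcomp : IsCompact (H : Set G)) (hcore : H.normalCore = ⊥) : SecondCountableTopology H := by
  have := QuotientGroup.discreteTopology hopen
  have := isCompact_iff_compactSpace.mp hcomp
  let f : G → G ⧸ H → G ⧸ H := fun g q => g • q
  have hf : Continuous f := continuous_pi fun q => continuous_id.smul continuous_const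
  have hinj : Function.Injective f := DFunLike.coe_injective.comp
    ((MonoidHom.ker_eq_bot_iff _).1 (H.normalCore_eq_ker ▸ hcore))
  exact ((hf.comp continuous_subtype_val).isClosedEmbedding
    (hinj.comp Subtype.val_injective)).isEmbedding.secondCountableTopology

theorem secondCountableTopology_of_isOpen_subgroup {G : Type*} [Group G] [TopologicalSpace G]
    [IsTopologicalGroup G] {H : Subgroup G} [Countable (G ⧸ H)] [SecondCountableTopology H]
    (hopen : IsOpen (H : Set G)) : SecondCountableTopology G := by
  let U : G ⧸ H → Set G := fun q => Homeomorph.mulLeft q.out '' H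
  have (q : G ⧸ H) : SecondCountableTopology (U q) :=
    ((Homeomorph.mulLeft q.out).image H).symm.isEmbedding.secondCountableTopology
  refine TopologicalSpace.secondCountableTopology_of_countable_cover (U := U)
    (fun q => (Homeomorph.mulLeft q.out).isOpenMap _ hopen) (eq_univ_of_forall fun g => ?_)
  refine mem_iUnion.2 ⟨g, (g : G ⧸ H).out⁻¹ * g, ?_, mul_inv_cancel_left _ _⟩
  exact QuotientGroup.eq.1 (QuotientGroup.out_eq' _)

/-- Proposition 4.1: A compactly generated, topologically simple t.d.l.c. group is
second countable. -/
theorem stmt_3 {L : Type*} [Group L] [TopologicalSpace L] [IsTopologicalGroup L]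
    [T2Space L] [LocallyCompactSpace L] [TotallyDisconnectedSpace L]
    [Nontrivial L]
    (hsimple : ∀ N : Subgroup L, N.Normal → IsClosed (N : Set L) → N = ⊥ ∨ N = ⊤)
    (hcg : ∃ K : Set L, IsCompact K ∧ Subgroup.closure K = ⊤) :
    SecondCountableTopology L := by
  obtain ⟨x, hx⟩ := exists_ne (1 : L)
  obtain ⟨H, hopen, hcomp, hxH⟩ :=
    exists_isOpen_isCompact_subgroup_subset (isOpen_compl_singleton.mem_nhds hx.symm)
  have hcore : H.normalCore = ⊥ := by
    refine (hsimple _ H.normalCore_normal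
      (H.normalCore_isClosed (Subgroup.isClosed_of_isOpen H hopen))).resolve_right fun htop => ?_
    exact hxH (H.normalCore_le (htop ▸ Subgroup.mem_top x)) rfl
  obtain ⟨K, hK, hKL⟩ := hcg
  have := sigmaCompactSpace_of_closure_eq_top hK hKL
  have := QuotientGroup.countable_of_isOpen hopen
  have := secondCountableTopology_of_normalCore_eq_bot hopen hcomp hcore
  exact secondCountableTopology_of_isOpen_subgroup hopen
end

section
/- Let L be a topological group possessing an open compact subgroup (for instance any t.d.l.c. group). If N is a normal subgroup of L that is discrete in the subspace topology, then N is contained in the virtual center VZ(L), i.e., every element of N has open centralizer in L. In particular, if VZ(L) = {1}, then every discrete normal subgroup of L is trivial. -/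
theorem Subgroup.Normal.isOpen_centralizer_of_discreteTopology {L : Type*} [Group L]
    [TopologicalSpace L] [ContinuousMul L] [ContinuousInv L] {N : Subgroup L} (hN : N.Normal)
    [DiscreteTopology N] {g : L} (hg : g ∈ N) :
    IsOpen ((Subgroup.centralizer {g} : Subgroup L) : Set L) := by
  let conjInN : L → N := fun x => ⟨x * g * x⁻¹, hN.conj_mem g hg x⟩
  have hconj : Continuous conjInN := by fun_prop
  convert (isOpen_discrete {(⟨g, hg⟩ : N)}).preimage hconj using 1
  ext x
  simp only [SetLike.mem_coe, Subgroup.mem_centralizer_singleton_iff, Set.mem_preimage,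
    Set.mem_singleton_iff, conjInN, Subtype.mk.injEq]
  exact mul_inv_eq_iff_eq_mul.symm

theorem stmt_5_general {L : Type*} [Group L] [TopologicalSpace L] [IsTopologicalGroup L]
    (N : Subgroup L) (hN : N.Normal) (hdisc : DiscreteTopology N) :
    (∀ g ∈ N, IsOpen ((Subgroup.centralizer {g} : Subgroup L) : Set L)) ∧
      ((∀ g : L, IsOpen ((Subgroup.centralizer {g} : Subgroup L) : Set L) → g = 1) →
        N = ⊥) := by
  have hcentralizer (g : L) (hg : g ∈ N) :=
    hN.isOpen_centralizer_of_discreteTopology hg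
  exact ⟨hcentralizer, fun htriv =>
    N.eq_bot_iff_forall.2 fun g hg => htriv g (hcentralizer g hg)⟩

/-- Proposition 5.2(a): In a topological group possessing an open compact subgroup,
every discrete normal subgroup is contained in the virtual center; in particular,
if the virtual center is trivial, every discrete normal subgroup is trivial. -/
theorem stmt_5 {L : Type*} [Group L] [TopologicalSpace L] [IsTopologicalGroup L]
    (hoc : ∃ G : Subgroup L, IsOpen (G : Set L) ∧ IsCompact (G : Set L))
    (N : Subgroup L) (hN : N.Normal) (hdisc : DiscreteTopology N) :
    (∀ g ∈ N, IsOpen ((Subgroup.centralizer {g} : Subgroup L) : Set L)) ∧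
      ((∀ g : L, IsOpen ((Subgroup.centralizer {g} : Subgroup L) : Set L) → g = 1) →
        N = ⊥) :=
  stmt_5_general N hN hdisc
end

section
/- Let L be a topological group possessing an open compact subgroup and with trivial virtual center VZ(L) = {1}. Let M be a nontrivial closed normal subgroup of L and let U be an open subgroup of L. Then M ∩ U ≠ {1}. -/
/-!
If `M ⊓ U = ⊥`, then for `m ∈ M` every commutator `⁅g, m⁆` lies in the normal subgroup `M`,
and for `g` near `1` it also lies in the open subgroup `U`; hence it is trivial. So the
centralizer of `m` is a neighbourhood of `1`, thus open, and triviality of the virtual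
center forces `m = 1`.
-/

open Topology
open scoped commutatorElement

lemma Subgroup.Normal.commutatorElement_mem {L : Type*} [Group L] {M : Subgroup L}
    (hM : M.Normal) (g : L) {m : L} (hm : m ∈ M) : ⁅g, m⁆ ∈ M :=
  M.mul_mem (hM.conj_mem m hm g) (M.inv_mem hm)

section

variable {L : Type*} [Group L] [TopologicalSpace L] [IsTopologicalGroup L]

lemma commutatorElement_preimage_mem_nhds_one {U : Set L} (hU : IsOpen U) (h1 : (1 : L) ∈ U)
    (m : L) : (fun g : L => ⁅g, m⁆) ⁻¹' U ∈ 𝓝 (1 : L) := by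
  have hcont : Continuous fun g : L => ⁅g, m⁆ := by
    simp only [commutatorElement_def]
    fun_prop
  exact hcont.continuousAt.preimage_mem_nhds (hU.mem_nhds (by simpa using h1))

lemma Subgroup.isOpen_centralizer_singleton_of_inf_eq_bot {M U : Subgroup L} (hM : M.Normal)
    (hU : IsOpen (U : Set L)) (hMU : M ⊓ U = ⊥) {m : L} (hm : m ∈ M) :
    IsOpen (Subgroup.centralizer {m} : Set L) := by
  refine Subgroup.isOpen_of_mem_nhds _ (Filter.mem_of_superset
    (commutatorElement_preimage_mem_nhds_one hU U.one_mem m) fun g hg => ?_)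
  have hcomm : ⁅g, m⁆ = 1 :=
    (Subgroup.mem_bot).mp (hMU ▸ Subgroup.mem_inf.mpr ⟨hM.commutatorElement_mem g hm, hg⟩)
  exact Subgroup.mem_centralizer_singleton_iff.mpr
    (commutatorElement_eq_one_iff_mul_comm.mp hcomm)

end

theorem stmt_6_general {L : Type*} [Group L] [TopologicalSpace L] [IsTopologicalGroup L]
    (hVZ : ∀ g : L, IsOpen ((Subgroup.centralizer {g} : Subgroup L) : Set L) → g = 1)
    (M : Subgroup L) (hM : M.Normal) (hMne : M ≠ ⊥)
    (U : Subgroup L) (hU : IsOpen (U : Set L)) :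
    M ⊓ U ≠ ⊥ := fun hMU =>
  hMne <| (Subgroup.eq_bot_iff_forall M).mpr fun _ hm =>
    hVZ _ (Subgroup.isOpen_centralizer_singleton_of_inf_eq_bot hM hU hMU hm)

/-- Proposition 5.2(b): Let `L` be a topological group possessing an open compact subgroup
and with trivial virtual center. If `M` is a nontrivial closed normal subgroup of `L` and
`U` is an open subgroup of `L`, then `M ∩ U ≠ {1}`. -/
theorem stmt_6 {L : Type*} [Group L] [TopologicalSpace L] [IsTopologicalGroup L]
    (hoc : ∃ G : Subgroup L, IsOpen (G : Set L) ∧ IsCompact (G : Set L))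
    (hVZ : ∀ g : L, IsOpen ((Subgroup.centralizer {g} : Subgroup L) : Set L) → g = 1)
    (M : Subgroup L) (hM : M.Normal) (hMclosed : IsClosed (M : Set L)) (hMne : M ≠ ⊥)
    (U : Subgroup L) (hU : IsOpen (U : Set L)) :
    M ⊓ U ≠ ⊥ :=
  stmt_6_general hVZ M hM hMne U hU
end

section
/- Let G be an infinite profinite group containing a nontrivial closed normal subgroup N with the following two properties: (i) N is sticky in G, i.e., for every topological group isomorphism φ : U → V between open subgroups U, V of G, the subgroup φ(N ∩ U) ∩ N has finite index in both N and φ(N ∩ U); (ii) the centralizer of N in G is nontrivial. Then G has no compactly generated, topologically simple envelope: there is no Hausdorff topological group L that is topologically simple and compactly generated, together with an injective continuous group homomorphism η : G → L whose range is open in L. -/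
/-!
Let `η : G → L` be an envelope and `N'` an infinite closed normal subgroup of `G`. The elements
of `L` centralizing a finite-index subgroup of `η N'` form a subgroup, which cannot be dense:
otherwise, by compact generation, `L` is generated by the open subgroup `η G` together with
finitely many elements of that subgroup, whose common centralizer then contains `η (S ⊓ N')` for
some open normal subgroup `S` of the profinite group `G`. Such an `η (S ⊓ N')` is normalized by `η G` and by these finitely
many elements, hence is a closed normal subgroup of `L`; it is nontrivial since `N'` is infinite,
and proper once `S` avoids a chosen element, against topological simplicity.

On the other hand that subgroup contains every conjugate of some `c ≠ 1`, hence the normal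
closure of `c`, which is dense by simplicity. If `N` is infinite, take `N' = N` and `c = η z` with
`1 ≠ z` centralizing `N`: stickiness says that conjugation by any element of `L`, which induces a
topological isomorphism between open subgroups of `G`, moves `η N` to a commensurable subgroup.
If `N` is finite, take `N' = G` and `c = η n` with `1 ≠ n ∈ N`, whose centralizer is open.
-/

open Pointwise Topology

namespace Subgroup

section Group

variable {L : Type*} [Group L] {H K : Subgroup L}

def virtualCentralizer (H : Subgroup L) : Subgroup L where
  carrier := {x | (centralizer {x}).relIndex H ≠ 0}
  one_mem' := by
    simp [centralizer_eq_top_iff_subset.mpr (Set.singleton_subset_iff.mpr (one_mem _))]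
  mul_mem' {x y} hx hy := by
    have hle : centralizer {x} ⊓ centralizer {y} ≤ centralizer {x * y} := fun z hz ↦ by
      simp only [mem_inf, mem_centralizer_singleton_iff] at hz ⊢
      exact Commute.mul_right hz.1 hz.2
    exact fun h ↦ relIndex_inf_ne_zero hx hy (relIndex_eq_zero_of_le_left hle h)
  inv_mem' {x} hx := by
    have hle : centralizer {x} ≤ centralizer {x⁻¹} := fun z hz ↦ by
      rw [mem_centralizer_singleton_iff] at hz ⊢
      exact Commute.inv_right hz
    exact fun h ↦ hx (relIndex_eq_zero_of_le_left hle h)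

lemma mem_virtualCentralizer_of_le {x : L} (hK : K ≤ centralizer {x}) (hKH : K.relIndex H ≠ 0) :
    x ∈ H.virtualCentralizer :=
  fun h ↦ hKH (relIndex_eq_zero_of_le_left hK h)

lemma relIndex_centralizer_ne_zero {F : Set L} (hF : F.Finite)
    (hFH : F ⊆ H.virtualCentralizer) : (centralizer F).relIndex H ≠ 0 := by
  rw [centralizer_eq_iInf, iInf_subtype']
  have := hF.to_subtype
  exact relIndex_iInf_ne_zero fun x ↦ hFH x.2

lemma map_centralizer_singleton_le {G : Type*} [Group G] (f : G →* L) (x : G) :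
    (centralizer {x}).map f ≤ centralizer {f x} := by
  simpa using map_centralizer_le_centralizer_image {x} f

lemma conj_mem_virtualCentralizer {c g : L} (hK : K ≤ centralizer {c})
    (hKH : (K.map (MulAut.conj g : L →* L)).relIndex H ≠ 0) :
    g * c * g⁻¹ ∈ H.virtualCentralizer :=
  mem_virtualCentralizer_of_le ((map_mono hK).trans (map_centralizer_singleton_le _ c)) hKH

lemma normalClosure_singleton_le {c : L} (h : ∀ g : L, g * c * g⁻¹ ∈ K) :
    normalClosure {c} ≤ K := by
  refine closure_le _ |>.mpr fun x hx ↦ ?_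
  obtain ⟨_, rfl, hconj⟩ := Group.mem_conjugatesOfSet_iff.mp hx
  obtain ⟨g, rfl⟩ := isConj_iff.mp hconj
  exact h g

lemma normal_of_closure_eq_top_of_subset_normalizer {S : Set L} (hS : closure S = ⊤)
    (hSK : S ⊆ normalizer (K : Set L)) : K.Normal := by
  rw [← normalizer_eq_top_iff, eq_top_iff, ← hS]
  exact closure_le _ |>.mpr hSK

end Group

section Topology

variable {L : Type*} [Group L] [TopologicalSpace L] [IsTopologicalGroup L] {H K : Subgroup L}

lemma relIndex_ne_zero_of_isOpen_of_isCompact (hK : IsOpen (K : Set L))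
    (hH : IsCompact (H : Set L)) : K.relIndex H ≠ 0 := by
  have := isCompact_iff_compactSpace.mp hH
  have := quotient_finite_of_isOpen (K.subgroupOf H) (hK.preimage continuous_subtype_val)
  exact index_ne_zero_of_finite

lemma continuous_mulAut_conj_symm (g : L) : Continuous (MulAut.conj g).symm := by
  have hconj : ⇑(MulAut.conj g).symm = fun x ↦ g⁻¹ * x * g⁻¹⁻¹ :=
    funext fun x ↦ by simp
  exact hconj ▸ IsTopologicalGroup.continuous_conj g⁻¹

lemma isOpen_map_conj (hK : IsOpen (K : Set L)) (g : L) :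
    IsOpen (K.map (MulAut.conj g : L →* L) : Set L) := by
  rw [map_equiv_eq_comap_symm]
  exact hK.preimage (continuous_mulAut_conj_symm g)

lemma exists_isOpen_inter_subset_of_relIndex_ne_zero (hK : IsClosed (K : Set L))
    (hKH : K.relIndex H ≠ 0) : ∃ O : Set L, IsOpen O ∧ 1 ∈ O ∧ O ∩ H ⊆ K := by
  have : (K.subgroupOf H).FiniteIndex := ⟨hKH⟩
  obtain ⟨O, hO, hOK⟩ := isOpen_induced_iff.mp <|
    (K.subgroupOf H).isOpen_of_isClosed_of_finiteIndex (hK.preimage continuous_subtype_val)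
  refine ⟨O, hO, ?_, fun x ⟨hxO, hxH⟩ ↦ ?_⟩
  · simpa using hOK.ge (one_mem (K.subgroupOf H))
  · simpa [mem_subgroupOf] using hOK.le (show (⟨x, hxH⟩ : H) ∈ Subtype.val ⁻¹' O from hxO)

lemma inf_ne_bot_of_isOpen (hK : IsOpen (K : Set L)) (hH : IsCompact (H : Set L))
    [Infinite H] : K ⊓ H ≠ ⊥ := fun hbot ↦ by
  have := relIndex_ne_zero_of_isOpen_of_isCompact hK hH
  rw [← inf_relIndex_right, hbot, relIndex_bot_left, Nat.card_eq_zero_of_infinite] at this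
  exact this rfl

lemma dense_of_forall_conj_mem
    (hsimple : ∀ M : Subgroup L, M.Normal → IsClosed (M : Set L) → M = ⊥ ∨ M = ⊤)
    {c : L} (hc : c ≠ 1) (hK : ∀ g : L, g * c * g⁻¹ ∈ K) : Dense (K : Set L) := by
  have hcl : (normalClosure {c}).topologicalClosure = ⊤ := by
    refine (hsimple _ (is_normal_topologicalClosure _) (isClosed_topologicalClosure _)).resolve_left
      fun hbot ↦ hc ?_
    simpa [hbot] using le_topologicalClosure _ (subset_normalClosure (Set.mem_singleton c))
  refine Dense.mono (normalClosure_singleton_le hK) ?_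
  rw [dense_iff_closure_eq, ← topologicalClosure_coe, hcl, coe_top]

lemma exists_finite_subset_closure_union_eq_top {C : Set L} (hC : IsCompact C)
    (hCgen : closure C = ⊤) (hK : IsOpen (K : Set L)) {D : Set L} (hD : Dense D) :
    ∃ F ⊆ D, F.Finite ∧ closure ((K : Set L) ∪ F) = ⊤ := by
  have hcover : C ⊆ ⋃ q ∈ D, q • (K : Set L) := fun x _ ↦ by
    obtain ⟨q, hqD, hq⟩ := hD.exists_mem_open (hK.smul x) ⟨x, by simp [mem_leftCoset_iff]⟩
    refine Set.mem_iUnion₂.2 ⟨q, hqD, ?_⟩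
    rw [mem_leftCoset_iff] at hq ⊢
    simpa using inv_mem hq
  obtain ⟨F, hFD, hF, hCF⟩ := hC.elim_finite_subcover_image (fun q _ ↦ hK.smul q) hcover
  refine ⟨F, hFD, hF, eq_top_iff.2 (hCgen ▸ closure_le _ |>.2 fun x hx ↦ ?_)⟩
  obtain ⟨q, hqF, hxq⟩ := Set.mem_iUnion₂.1 (hCF hx)
  rw [mem_leftCoset_iff] at hxq
  have hq : q ∈ closure ((K : Set L) ∪ F) := subset_closure (Or.inr hqF)
  have hq' : q⁻¹ * x ∈ closure ((K : Set L) ∪ F) := subset_closure (Or.inl hxq)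
  simpa using mul_mem hq hq'

end Topology

section Sticky

variable {G : Type*} [Group G] {L : Type*} [Group L]

def IsSticky [TopologicalSpace G] (N : Subgroup G) : Prop :=
  ∀ (U V : Subgroup G), IsOpen (U : Set G) → IsOpen (V : Set G) →
    ∀ φ : U ≃* V, Continuous φ → Continuous φ.symm →
      (((N.subgroupOf U).map φ.toMonoidHom).map V.subtype).relIndex N ≠ 0 ∧
      N.relIndex (((N.subgroupOf U).map φ.toMonoidHom).map V.subtype) ≠ 0

noncomputable def equivComapMapMap (A : Subgroup G) {η : G →* L} (hinj : Function.Injective η)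
    (σ : L ≃* L) (hA : (A.map η).map (σ : L →* L) ≤ η.range) :
    A ≃* ((A.map η).map (σ : L →* L)).comap η :=
  (A.equivMapOfInjective η hinj).trans <| (σ.subgroupMap (A.map η)).trans <|
    (MulEquiv.subgroupCongr (map_comap_eq_self hA).symm).trans
      ((((A.map η).map (σ : L →* L)).comap η).equivMapOfInjective η hinj).symm

lemma apply_coe_equivComapMapMap (A : Subgroup G) {η : G →* L} (hinj : Function.Injective η)
    (σ : L ≃* L) (hA : (A.map η).map (σ : L →* L) ≤ η.range) (a : A) :
    η (A.equivComapMapMap hinj σ hA a) = σ (η a) := by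
  simp only [equivComapMapMap, MulEquiv.trans_apply]
  rw [← coe_equivMapOfInjective_apply _ η hinj, MulEquiv.apply_symm_apply]
  rfl

lemma IsSticky.relIndex_map_map_ne_zero [TopologicalSpace G] [CompactSpace G]
    [TopologicalSpace L] [T2Space L] {N : Subgroup G} (hN : N.IsSticky) {η : G →* L}
    (hη : Continuous η) (hinj : Function.Injective η) (hrange : IsOpen (Set.range η))
    (σ : L ≃* L) (hσ : Continuous σ) (hσsymm : Continuous σ.symm) :
    ((N.map η).map (σ : L →* L)).relIndex (N.map η) ≠ 0 := by
  have hemb : IsOpenEmbedding η := ⟨(hη.isClosedEmbedding hinj).isEmbedding, hrange⟩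
  set A : Subgroup G := (η.range.comap (σ : L →* L)).comap η
  have hA : (A.map η).map (σ : L →* L) ≤ η.range := by
    rintro _ ⟨_, ⟨a, ha, rfl⟩, rfl⟩
    exact ha
  set B : Subgroup G := ((A.map η).map (σ : L →* L)).comap η
  set φ := A.equivComapMapMap hinj σ hA
  have hAopen : IsOpen (A : Set G) := (hrange.preimage hσ).preimage hη
  have hBopen : IsOpen (B : Set G) :=
    ((Homeomorph.mk σ.toEquiv hσ hσsymm).isOpenMap _ (hemb.isOpenMap _ hAopen)).preimage hη
  have hφ : ∀ a, η (φ a) = σ (η a) := apply_coe_equivComapMapMap A hinj σ hA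
  have hφsymm : ∀ b, η (φ.symm b) = σ.symm (η b) := fun b ↦ by
    rw [MulEquiv.eq_symm_apply, ← hφ, MulEquiv.apply_symm_apply]
  have hembsub {S : Subgroup G} : IsEmbedding (η ∘ Subtype.val : S → L) :=
    hemb.isEmbedding.comp IsEmbedding.subtypeVal
  have hφcont : Continuous φ := by
    rw [hembsub.continuous_iff]
    exact (funext hφ : η ∘ Subtype.val ∘ φ = _) ▸
      hσ.comp (hη.comp continuous_subtype_val)
  have hφsymmcont : Continuous φ.symm := by
    rw [hembsub.continuous_iff]
    exact (funext hφsymm : η ∘ Subtype.val ∘ φ.symm = _) ▸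
      hσsymm.comp (hη.comp continuous_subtype_val)
  have hle : (((N.subgroupOf A).map φ.toMonoidHom).map B.subtype).map η ≤
      (N.map η).map (σ : L →* L) := by
    rintro _ ⟨_, ⟨b, ⟨a, ha, rfl⟩, rfl⟩, rfl⟩
    exact ⟨η a, ⟨a, ha, rfl⟩, (hφ a).symm⟩
  have hstick := (hN A B hAopen hBopen φ hφcont hφsymmcont).1
  rw [← relIndex_map_map_of_injective _ _ hinj] at hstick
  exact fun h ↦ hstick (relIndex_eq_zero_of_le_left hle h)

end Sticky

lemma isOpen_centralizer_of_mem_of_finite {G : Type*} [Group G] [TopologicalSpace G]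
    [IsTopologicalGroup G] [T1Space G] {N : Subgroup G} [hN : N.Normal]
    (hfin : (N : Set G).Finite) {x : G} (hx : x ∈ N) :
    IsOpen (centralizer {x} : Set G) := by
  have hC : (centralizer {x} : Set G) =
      (fun g ↦ g * x * g⁻¹) ⁻¹' ((N : Set G) \ {x})ᶜ := by
    ext g
    simp [mem_centralizer_singleton_iff, hN.conj_mem x hx g, mul_inv_eq_iff_eq_mul]
  rw [hC]
  exact (hfin.sdiff.isClosed.isOpen_compl).preimage (IsTopologicalGroup.continuous_conj' x)

theorem not_dense_virtualCentralizer_map {G : Type*} [Group G] [TopologicalSpace G]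
    [IsTopologicalGroup G] [CompactSpace G] [TotallyDisconnectedSpace G]
    {L : Type*} [Group L] [TopologicalSpace L] [IsTopologicalGroup L] [T2Space L]
    {η : G →* L} (hη : Continuous η) (hinj : Function.Injective η)
    (hrange : IsOpen (Set.range η))
    (hsimple : ∀ M : Subgroup L, M.Normal → IsClosed (M : Set L) → M = ⊥ ∨ M = ⊤)
    {C : Set L} (hC : IsCompact C) (hCgen : closure C = ⊤)
    {N : Subgroup G} [N.Normal] (hNclosed : IsClosed (N : Set G)) [Infinite N] :
    ¬ Dense ((N.map η).virtualCentralizer : Set L) := by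
  intro hdense
  obtain ⟨F, hFD, hF, hFgen⟩ :=
    exists_finite_subset_closure_union_eq_top hC hCgen (K := η.range) hrange hdense
  have hRclosed : IsClosed ((centralizer F).comap η : Set G) :=
    (Set.isClosed_centralizer F).preimage hη
  have hRN : ((centralizer F).comap η).relIndex N ≠ 0 := by
    rw [relIndex_comap]
    exact relIndex_centralizer_ne_zero hF hFD
  obtain ⟨O, hO, h1O, hON⟩ := exists_isOpen_inter_subset_of_relIndex_ne_zero hRclosed hRN
  obtain ⟨⟨a, haN⟩, ha⟩ := exists_ne (1 : N)
  obtain ⟨S, hS⟩ := ProfiniteGrp.exist_openNormalSubgroup_sub_open_nhds_of_one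
    (hO.inter isOpen_compl_singleton) ⟨h1O, fun h ↦ ha (Subtype.ext h.symm)⟩
  set W := ((S : Subgroup G) ⊓ N).map η
  have hWF : W ≤ centralizer F := map_le_iff_le_comap.2 fun x hx ↦ hON ⟨(hS hx.1).1, hx.2⟩
  have hWnormal : W.Normal := by
    refine normal_of_closure_eq_top_of_subset_normalizer hFgen ?_
    rintro _ (⟨g, rfl⟩ | hx)
    · exact le_normalizer_map η ⟨g, by rw [normalizer_eq_top]; trivial, rfl⟩
    · exact centralizer_le_normalizer _ <|
        mem_centralizer_iff.2 fun w hw ↦ (mem_centralizer_iff.1 (hWF hw) _ hx).symm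
  have hWclosed : IsClosed (W : Set L) :=
    ((S.isClosed.inter hNclosed).isCompact.image hη).isClosed
  rcases hsimple W hWnormal hWclosed with hbot | htop
  · exact inf_ne_bot_of_isOpen S.isOpen hNclosed.isCompact
      ((map_eq_bot_iff_of_injective _ hinj).mp hbot)
  · have haW : η a ∈ W := htop ▸ mem_top _
    exact (hS ((mem_map_iff_mem hinj).mp haW).1).2 rfl

end Subgroup

/-- Theorem 4.6: An infinite profinite group `G` containing a nontrivial closed normal
subgroup `N` which is sticky and has nontrivial centralizer admits no compactly generated,
topologically simple envelope. -/
theorem stmt_7 {G : Type*} [Group G] [TopologicalSpace G] [IsTopologicalGroup G]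
    [CompactSpace G] [T2Space G] [TotallyDisconnectedSpace G] [Infinite G]
    (N : Subgroup G) (hNne : N ≠ ⊥) (hNnormal : N.Normal)
    (hNclosed : IsClosed (N : Set G))
    -- (i) stickiness: for every topological isomorphism `φ : U → V` between open
    -- subgroups of `G`, the subgroup `φ(N ∩ U) ∩ N` has finite index in both `N`
    -- and `φ(N ∩ U)`
    (hsticky : ∀ (U V : Subgroup G), IsOpen (U : Set G) → IsOpen (V : Set G) →
      ∀ φ : U ≃* V, Continuous φ → Continuous φ.symm →
        (((N.subgroupOf U).map φ.toMonoidHom).map V.subtype).relIndex N ≠ 0 ∧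
        N.relIndex (((N.subgroupOf U).map φ.toMonoidHom).map V.subtype) ≠ 0)
    -- (ii) the centralizer of `N` in `G` is nontrivial
    (hcent : Subgroup.centralizer (N : Set G) ≠ ⊥) :
    -- there is no compactly generated, topologically simple envelope of `G`
    ∀ (L : Type*) [Group L] [TopologicalSpace L] [IsTopologicalGroup L] [T2Space L]
      (η : G →* L), Continuous η → Function.Injective η → IsOpen (Set.range η) →
        Nontrivial L →
        (∀ M : Subgroup L, M.Normal → IsClosed (M : Set L) → M = ⊥ ∨ M = ⊤) →
        ¬ ∃ K : Set L, IsCompact K ∧ Subgroup.closure K = ⊤ := by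
  intro L _ _ _ _ η hη hinj hrange _ hsimple ⟨C, hC, hCgen⟩
  have hne_one {x : G} (hx : x ≠ 1) : η x ≠ 1 := (map_ne_one_iff η hinj).mpr hx
  rcases finite_or_infinite N with hNfin | hNinf
  · obtain ⟨⟨n, hnN⟩, hn⟩ := Subgroup.ne_bot_iff_exists_ne_one.mp hNne
    have hCn : IsOpen ((Subgroup.centralizer {n}).map η : Set L) :=
      (IsOpenEmbedding.isOpenMap ⟨(hη.isClosedEmbedding hinj).isEmbedding, hrange⟩) _
        (Subgroup.isOpen_centralizer_of_mem_of_finite (Set.toFinite _) hnN)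
    have : Infinite (⊤ : Subgroup G) := .of_injective _ Subgroup.topEquiv.symm.injective
    refine Subgroup.not_dense_virtualCentralizer_map hη hinj hrange hsimple hC hCgen (N := ⊤)
      isClosed_univ <| Subgroup.dense_of_forall_conj_mem hsimple
        (hne_one fun h ↦ hn (Subtype.ext h)) fun g ↦ ?_
    refine Subgroup.conj_mem_virtualCentralizer (Subgroup.map_centralizer_singleton_le η n) ?_
    exact Subgroup.relIndex_ne_zero_of_isOpen_of_isCompact (Subgroup.isOpen_map_conj hCn g)
      (by simpa using isCompact_univ.image hη)
  · obtain ⟨⟨c, hc⟩, hc1⟩ := Subgroup.ne_bot_iff_exists_ne_one.mp hcent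
    have hNc : N ≤ Subgroup.centralizer {c} := fun x hx ↦
      Subgroup.mem_centralizer_singleton_iff.2 (Subgroup.mem_centralizer_iff.1 hc x hx)
    refine Subgroup.not_dense_virtualCentralizer_map hη hinj hrange hsimple hC hCgen hNclosed <|
      Subgroup.dense_of_forall_conj_mem hsimple (hne_one fun h ↦ hc1 (Subtype.ext h)) fun g ↦
        Subgroup.conj_mem_virtualCentralizer
          ((Subgroup.map_mono hNc).trans (Subgroup.map_centralizer_singleton_le η c)) ?_
    exact Subgroup.IsSticky.relIndex_map_map_ne_zero hsticky hη hinj hrange (MulAut.conj g)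
      (IsTopologicalGroup.continuous_conj g) (Subgroup.continuous_mulAut_conj_symm g)
end

section
/- Let G be a profinite group with trivial virtual center VZ(G) = {1}. Suppose R is a closed normal subgroup of G that is nilpotent (as an abstract group) and contains every nilpotent normal subgroup of G (i.e., R is the Fitting subgroup of G and is nilpotent). Then R is sticky in G: for every topological group isomorphism φ : U → V between open subgroups U, V of G, the subgroup φ(R ∩ U) ∩ R has finite index in both R and φ(R ∩ U). -/
/-!
Let `N = φ(R ∩ U)`; it is nilpotent and normalized by the open subgroup `V`. Choose an open
normal subgroup `K ≤ V`. Then `N ⊓ K` is normalized by `K`, and so are its `G`-conjugates, of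
which there are finitely many because they only depend on the coset of `K`. By Fitting's
theorem the join of these conjugates is a nilpotent normal subgroup of `G`, hence lies in `R`.
Thus `N ⊓ K ≤ R`, and `N ⊓ K` has finite index in the compact group `N`. The same argument
for `φ⁻¹`, transported back along `φ`, gives an open subgroup whose intersection with `R`
lies in `N`.
-/

namespace Subgroup

variable {G : Type*} [Group G]

theorem commutator_le_iff_le_comap_centralizer {A L M : Subgroup G} [M.Normal] :
    ⁅A, L⁆ ≤ M ↔
      A ≤ (centralizer (L.map (QuotientGroup.mk' M))).comap (QuotientGroup.mk' M) := by
  rw [← map_le_iff_le_comap, ← commutator_eq_bot_iff_le_centralizer, ← map_commutator,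
    map_eq_bot_iff, QuotientGroup.ker_mk']

theorem iSup_commutator_le {ι : Sort*} {A : ι → Subgroup G} {L M : Subgroup G} [M.Normal]
    (h : ∀ i, ⁅A i, L⁆ ≤ M) : ⁅⨆ i, A i, L⁆ ≤ M :=
  commutator_le_iff_le_comap_centralizer.2 <|
    iSup_le fun i => commutator_le_iff_le_comap_centralizer.1 (h i)

theorem commutator_sup_le {A L₁ L₂ M : Subgroup G} [M.Normal]
    (h₁ : ⁅A, L₁⁆ ≤ M) (h₂ : ⁅A, L₂⁆ ≤ M) : ⁅A, L₁ ⊔ L₂⁆ ≤ M := by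
  rw [commutator_comm] at h₁ h₂ ⊢
  exact commutator_le_iff_le_comap_centralizer.2 <|
    sup_le (commutator_le_iff_le_comap_centralizer.1 h₁)
      (commutator_le_iff_le_comap_centralizer.1 h₂)

section Fitting

def lowerCentralSeriesFromTop (H : Subgroup G) : ℕ → Subgroup G
  | 0 => ⊤
  | n + 1 => H.lowerCentralSeries n

variable {H K : Subgroup G}

instance lowerCentralSeriesFromTop_normal [H.Normal] (n : ℕ) :
    (H.lowerCentralSeriesFromTop n).Normal := by
  cases n <;> dsimp only [lowerCentralSeriesFromTop] <;> infer_instance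

theorem commutator_lowerCentralSeriesFromTop_le [H.Normal] (n : ℕ) :
    ⁅H.lowerCentralSeriesFromTop n, H⁆ ≤ H.lowerCentralSeriesFromTop (n + 1) := by
  cases n with
  | zero => exact commutator_le_right ⊤ H
  | succ n => exact le_rfl

theorem lowerCentralSeriesFromTop_antitone : Antitone H.lowerCentralSeriesFromTop := by
  refine antitone_nat_of_succ_le fun n => ?_
  cases n with
  | zero => exact le_top
  | succ n => exact H.lowerCentralSeries_antitone n.le_succ

theorem lowerCentralSeriesFromTop_eq_bot {c n : ℕ} (hc : H.lowerCentralSeries c = ⊥)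
    (hn : c < n) : H.lowerCentralSeriesFromTop n = ⊥ :=
  le_bot_iff.1 <| hc ▸ lowerCentralSeriesFromTop_antitone hn

/-- `⨆_{i+j=n} γᵢ(H) ⊓ γⱼ(K)`, with the lower central series indexed so that `γ₀ = ⊤`
and `γ₁ = H`. -/
def fittingSeries (H K : Subgroup G) (n : ℕ) : Subgroup G :=
  ⨆ (i) (j) (_ : i + j = n), H.lowerCentralSeriesFromTop i ⊓ K.lowerCentralSeriesFromTop j

theorem le_fittingSeries {i j n : ℕ} (h : i + j = n) :
    H.lowerCentralSeriesFromTop i ⊓ K.lowerCentralSeriesFromTop j ≤ fittingSeries H K n :=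
  le_iSup₂_of_le i j <| le_iSup_of_le h le_rfl

theorem fittingSeries_eq_bot {c d : ℕ} (hc : H.lowerCentralSeries c = ⊥)
    (hd : K.lowerCentralSeries d = ⊥) : fittingSeries H K (c + d + 1) = ⊥ := by
  refine le_bot_iff.1 <| iSup₂_le fun i j => iSup_le fun hij => ?_
  rcases (by omega : c < i ∨ d < j) with h | h
  · exact inf_le_left.trans (lowerCentralSeriesFromTop_eq_bot hc h).le
  · exact inf_le_right.trans (lowerCentralSeriesFromTop_eq_bot hd h).le

variable [H.Normal] [K.Normal]

instance fittingSeries_normal (n : ℕ) : (fittingSeries H K n).Normal := by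
  unfold fittingSeries; infer_instance

theorem commutator_fittingSeries_le (n : ℕ) :
    ⁅fittingSeries H K n, H ⊔ K⁆ ≤ fittingSeries H K (n + 1) := by
  refine commutator_sup_le
    (iSup_commutator_le fun i => iSup_commutator_le fun j => iSup_commutator_le fun h => ?_)
    (iSup_commutator_le fun i => iSup_commutator_le fun j => iSup_commutator_le fun h => ?_)
  · refine le_trans (le_inf ?_ ?_) (le_fittingSeries (i := i + 1) (j := j) (by omega))
    · exact (commutator_mono inf_le_left le_rfl).trans (commutator_lowerCentralSeriesFromTop_le _)
    · exact (commutator_mono inf_le_right le_rfl).trans (commutator_le_left _ _)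
  · refine le_trans (le_inf ?_ ?_) (le_fittingSeries (i := i) (j := j + 1) (by omega))
    · exact (commutator_mono inf_le_left le_rfl).trans (commutator_le_left _ _)
    · exact (commutator_mono inf_le_right le_rfl).trans (commutator_lowerCentralSeriesFromTop_le _)

theorem lowerCentralSeries_sup_le_fittingSeries (n : ℕ) :
    (H ⊔ K).lowerCentralSeries n ≤ fittingSeries H K (n + 1) := by
  induction n with
  | zero =>
    exact sup_le ((le_inf le_rfl le_top).trans (le_fittingSeries (i := 1) (j := 0) rfl))
      ((le_inf le_top le_rfl).trans (le_fittingSeries (i := 0) (j := 1) rfl))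
  | succ n ih => exact (commutator_mono ih le_rfl).trans (commutator_fittingSeries_le _)

/-- Fitting's theorem. -/
theorem isNilpotent_sup [Group.IsNilpotent H] [Group.IsNilpotent K] :
    Group.IsNilpotent ↥(H ⊔ K) := by
  obtain ⟨c, hc⟩ := (isNilpotent_iff_lowerCentralSeries H).1 ‹_›
  obtain ⟨d, hd⟩ := (isNilpotent_iff_lowerCentralSeries K).1 ‹_›
  exact isNilpotent_of_lowerCentralSeries_eq_bot <| le_bot_iff.1 <|
    (lowerCentralSeries_sup_le_fittingSeries (c + d)).trans (fittingSeries_eq_bot hc hd).le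

end Fitting

theorem isNilpotent_iSup_of_finite {ι : Type*} [Finite ι] (H : ι → Subgroup G)
    [∀ i, (H i).Normal] (hH : ∀ i, Group.IsNilpotent (H i)) :
    Group.IsNilpotent ↥(⨆ i, H i) := by
  have := Fintype.ofFinite ι
  rw [← Finset.sup_univ_eq_iSup]
  refine (Finset.sup_induction (p := fun S : Subgroup G => S.Normal ∧ Group.IsNilpotent S)
    ⟨inferInstance, inferInstance⟩ (fun S hS T hT => ?_) fun i _ => ⟨inferInstance, hH i⟩).2
  have := hS.1; have := hS.2; have := hT.1; have := hT.2
  exact ⟨inferInstance, isNilpotent_sup⟩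

theorem isNilpotent_iSup_of_le_normalizer {ι : Type*} [Finite ι] {K : Subgroup G}
    (H : ι → Subgroup G) (hHK : ∀ i, H i ≤ K) (hKH : ∀ i, K ≤ normalizer (H i))
    (hH : ∀ i, Group.IsNilpotent (H i)) : Group.IsNilpotent ↥(⨆ i, H i) := by
  have : ∀ i, ((H i).subgroupOf K).Normal := fun i =>
    (normal_subgroupOf_iff_le_normalizer (hHK i)).2 (hKH i)
  have hsup : (⨆ i, (H i).subgroupOf K).map K.subtype = ⨆ i, H i := by
    simp only [map_iSup, subgroupOf_map_subtype, inf_of_le_left (hHK _)]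
  have := isNilpotent_iSup_of_finite (fun i => (H i).subgroupOf K)
    fun i => Group.nilpotent_of_mulEquiv (subgroupOfEquivOfLe (hHK i)).symm
  exact Group.nilpotent_of_mulEquiv <|
    (equivMapOfInjective _ K.subtype K.subtype_injective).trans (MulEquiv.subgroupCongr hsup)

theorem map_conj_mul (A : Subgroup G) (g h : G) :
    A.map (MulAut.conj (g * h) : G →* G) =
      (A.map (MulAut.conj h : G →* G)).map (MulAut.conj g : G →* G) := by
  rw [map_map]
  congr 1
  ext
  simp [mul_assoc]

theorem normal_iSup_map_conj (A : Subgroup G) :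
    (⨆ g : G, A.map (MulAut.conj g : G →* G)).Normal := by
  refine normal_iff_map_conj_eq.2 fun g => ?_
  simp only [map_iSup, ← map_conj_mul]
  exact (Equiv.mulLeft g).surjective.iSup_comp fun h => A.map (MulAut.conj h : G →* G)

theorem isNilpotent_iSup_map_conj {A K : Subgroup G} [K.Normal] [Finite (G ⧸ K)] (hAK : A ≤ K)
    (hKA : K ≤ normalizer A) (hA : Group.IsNilpotent A) :
    Group.IsNilpotent ↥(⨆ g : G, A.map (MulAut.conj g : G →* G)) := by
  have hcoset (g : G) : A.map (MulAut.conj (QuotientGroup.mk (s := K) g).out : G →* G) =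
      A.map (MulAut.conj g : G →* G) := by
    obtain ⟨k, hk⟩ := QuotientGroup.mk_out_eq_mul K g
    rw [hk, map_conj_mul, mem_normalizer_iff_map_conj_eq.1 (hKA k.2)]
  have hreindex : ⨆ g : G, A.map (MulAut.conj g : G →* G) =
      ⨆ q : G ⧸ K, A.map (MulAut.conj q.out : G →* G) := by
    rw [← QuotientGroup.mk_surjective.iSup_comp]
    simp only [hcoset]
  rw [hreindex]
  refine isNilpotent_iSup_of_le_normalizer (K := K) _ (fun q => ?_) (fun q => ?_) fun q => ?_
  · calc A.map (MulAut.conj q.out : G →* G) ≤ K.map (MulAut.conj q.out : G →* G) :=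
          map_mono hAK
      _ = K := Normal.map_conj_eq K _
  · calc K = K.map (MulAut.conj q.out : G →* G) := (Normal.map_conj_eq K _).symm
      _ ≤ (normalizer A).map (MulAut.conj q.out : G →* G) := map_mono hKA
      _ = _ := by
        simpa only [MulEquiv.toMonoidHom_eq_coe] using
          map_equiv_normalizer_eq A (MulAut.conj q.out)
  · exact Group.nilpotent_of_mulEquiv (A.equivMapOfInjective _ (MulAut.conj q.out).injective)

variable [TopologicalSpace G] [IsTopologicalGroup G]

theorem relIndex_ne_zero_of_inf_le {H K L : Subgroup G} (hH : IsCompact (H : Set G))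
    (hK : IsOpen (K : Set G)) (hKHL : K ⊓ H ≤ L) : L.relIndex H ≠ 0 := by
  have := isCompact_iff_compactSpace.1 hH
  have : Finite (H ⧸ K.subgroupOf H) :=
    quotient_finite_of_isOpen _ (hK.preimage continuous_subtype_val)
  intro hL
  exact index_ne_zero_of_finite (inf_relIndex_right K H ▸ relIndex_eq_zero_of_le_left hKHL hL)

theorem exists_isOpen_inf_le [CompactSpace G] {R N V : Subgroup G}
    (hR : ∀ S : Subgroup G, S.Normal → Group.IsNilpotent S → S ≤ R)
    (hV : IsOpen (V : Set G)) (hVN : V ≤ normalizer N) (hN : Group.IsNilpotent N) :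
    ∃ K : Subgroup G, IsOpen (K : Set G) ∧ N ⊓ K ≤ R := by
  obtain ⟨K, hKV⟩ := IsTopologicalGroup.exist_openNormalSubgroup_sub_clopen_nhds_of_one
    ⟨V.isClosed_of_isOpen hV, hV⟩ V.one_mem
  have : Finite (G ⧸ K.toSubgroup) := quotient_finite_of_isOpen _ K.isOpen'
  refine ⟨K, K.isOpen', ?_⟩
  have hKA : K.toSubgroup ≤ normalizer (N ⊓ K.toSubgroup) :=
    (le_inf (hKV.trans hVN) le_normalizer_of_normal).trans inf_normalizer_le_normalizer_inf
  have hA : Group.IsNilpotent ↥(N ⊓ K.toSubgroup) :=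
    Group.nilpotent_of_mulEquiv (subgroupOfEquivOfLe inf_le_left)
  calc N ⊓ K.toSubgroup ≤ ⨆ g : G, (N ⊓ K.toSubgroup).map (MulAut.conj g : G →* G) :=
        le_iSup_of_le 1 (mem_normalizer_iff_map_conj_eq.1 (one_mem _)).ge
    _ ≤ R := hR _ (normal_iSup_map_conj _) (isNilpotent_iSup_map_conj inf_le_right hKA hA)

end Subgroup

theorem Group.isNilpotent_of_injective {G H : Type*} [Group G] [Group H] [Group.IsNilpotent H]
    (f : G →* H) (hf : Function.Injective f) : Group.IsNilpotent G :=
  Group.nilpotent_of_mulEquiv (MonoidHom.ofInjective hf).symm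

namespace MulEquiv

open Subgroup

variable {G : Type*} [Group G] {U V : Subgroup G}

/-- The image `φ(H ∩ U)` of `H` under the virtual isomorphism `φ`, as a subgroup of `G`. -/
def virtualImage (φ : U ≃* V) (H : Subgroup G) : Subgroup G :=
  ((H.subgroupOf U).map φ.toMonoidHom).map V.subtype

variable (φ : U ≃* V)

theorem virtualImage_mono : Monotone φ.virtualImage :=
  fun _ _ h => map_mono <| map_mono <| comap_mono h

theorem virtualImage_inf_le (H K : Subgroup G) :
    φ.virtualImage K ⊓ H ≤ φ.virtualImage (K ⊓ φ.symm.virtualImage H) := by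
  rintro _ ⟨⟨_, ⟨u, hu, rfl⟩, rfl⟩, hH⟩
  exact ⟨φ u, ⟨u, ⟨hu, u, ⟨φ u, hH, φ.symm_apply_apply u⟩, rfl⟩, rfl⟩, rfl⟩

theorem le_normalizer_virtualImage {H : Subgroup G} [H.Normal] :
    V ≤ normalizer (φ.virtualImage H) := by
  rw [le_normalizer_iff]
  rintro v hv _ ⟨_, ⟨u, hu, rfl⟩, rfl⟩
  set w := φ.symm ⟨v, hv⟩
  refine ⟨φ (w * u * w⁻¹), ⟨_, ?_, rfl⟩, by simp [w]⟩
  exact ‹H.Normal›.conj_mem _ hu w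

theorem isNilpotent_virtualImage {H : Subgroup G} (hH : Group.IsNilpotent H) :
    Group.IsNilpotent (φ.virtualImage H) := by
  have : Group.IsNilpotent (H.subgroupOf U) :=
    Group.isNilpotent_of_injective (U.subtype.subgroupComap H)
      fun _ _ h => by ext; exact congrArg (Subtype.val : H → G) h
  rw [virtualImage, map_map]
  exact Group.nilpotent_of_mulEquiv
    (equivMapOfInjective _ _ (V.subtype_injective.comp φ.injective))

theorem coe_virtualImage (H : Subgroup G) :
    (φ.virtualImage H : Set G) = (↑) '' (φ '' ((↑) ⁻¹' (H : Set G))) := by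
  rw [virtualImage, coe_map, coe_map]
  rfl

variable [TopologicalSpace G]

theorem isOpen_virtualImage (hV : IsOpen (V : Set G)) (hφ : Continuous φ.symm)
    {H : Subgroup G} (hH : IsOpen (H : Set G)) : IsOpen (φ.virtualImage H : Set G) := by
  rw [coe_virtualImage, Set.image_eq_preimage_of_inverse φ.symm_apply_apply φ.apply_symm_apply]
  exact hV.isOpenMap_subtype_val _ ((hH.preimage continuous_subtype_val).preimage hφ)

theorem isCompact_virtualImage [IsTopologicalGroup G] [CompactSpace G]
    (hU : IsOpen (U : Set G)) (hφ : Continuous φ) {H : Subgroup G} (hH : IsClosed (H : Set G)) :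
    IsCompact (φ.virtualImage H : Set G) := by
  have := isCompact_iff_compactSpace.1 (U.isClosed_of_isOpen hU).isCompact
  rw [coe_virtualImage]
  exact ((hH.preimage continuous_subtype_val).isCompact.image hφ).image continuous_subtype_val

end MulEquiv

theorem stmt_9_general {G : Type*} [Group G] [TopologicalSpace G] [IsTopologicalGroup G]
    [CompactSpace G]
    (R : Subgroup G) (hRnormal : R.Normal) (hRclosed : IsClosed (R : Set G))
    (hRnilp : Group.IsNilpotent R)
    (hRmax : ∀ S : Subgroup G, S.Normal → Group.IsNilpotent S → S ≤ R) :
    -- stickiness: for every topological isomorphism `φ : U → V` between open subgroups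
    -- of `G`, the subgroup `φ(R ∩ U) ∩ R` has finite index in both `R` and `φ(R ∩ U)`
    ∀ (U V : Subgroup G), IsOpen (U : Set G) → IsOpen (V : Set G) →
      ∀ φ : U ≃* V, Continuous φ → Continuous φ.symm →
        (((R.subgroupOf U).map φ.toMonoidHom).map V.subtype).relIndex R ≠ 0 ∧
        R.relIndex (((R.subgroupOf U).map φ.toMonoidHom).map V.subtype) ≠ 0 := by
  intro U V hU hV φ hφ hφsymm
  refine ⟨?_, ?_⟩
  · obtain ⟨K, hK, hKR⟩ := Subgroup.exists_isOpen_inf_le hRmax hU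
      φ.symm.le_normalizer_virtualImage (φ.symm.isNilpotent_virtualImage hRnilp)
    refine Subgroup.relIndex_ne_zero_of_inf_le hRclosed.isCompact
      (φ.isOpen_virtualImage hV hφsymm hK) ?_
    calc φ.virtualImage K ⊓ R ≤ φ.virtualImage (K ⊓ φ.symm.virtualImage R) :=
          φ.virtualImage_inf_le R K
      _ ≤ φ.virtualImage R := φ.virtualImage_mono (inf_comm K _ ▸ hKR)
  · obtain ⟨K, hK, hKR⟩ := Subgroup.exists_isOpen_inf_le hRmax hV
      φ.le_normalizer_virtualImage (φ.isNilpotent_virtualImage hRnilp)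
    exact Subgroup.relIndex_ne_zero_of_inf_le (φ.isCompact_virtualImage hU hφ hRclosed) hK
      (inf_comm K _ ▸ hKR)

/-- Proposition 4.7: If `G` is a profinite group with trivial virtual center whose Fitting
subgroup `R` is nilpotent (i.e. `R` is a closed normal nilpotent subgroup containing every
nilpotent normal subgroup of `G`), then `R` is sticky in `G`. -/
theorem stmt_9 {G : Type*} [Group G] [TopologicalSpace G] [IsTopologicalGroup G]
    [CompactSpace G] [T2Space G] [TotallyDisconnectedSpace G]
    (hVZ : ∀ g : G, IsOpen ((Subgroup.centralizer {g} : Subgroup G) : Set G) → g = 1)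
    (R : Subgroup G) (hRnormal : R.Normal) (hRclosed : IsClosed (R : Set G))
    (hRnilp : Group.IsNilpotent R)
    (hRmax : ∀ S : Subgroup G, S.Normal → Group.IsNilpotent S → S ≤ R) :
    -- stickiness: for every topological isomorphism `φ : U → V` between open subgroups
    -- of `G`, the subgroup `φ(R ∩ U) ∩ R` has finite index in both `R` and `φ(R ∩ U)`
    ∀ (U V : Subgroup G), IsOpen (U : Set G) → IsOpen (V : Set G) →
      ∀ φ : U ≃* V, Continuous φ → Continuous φ.symm →
        (((R.subgroupOf U).map φ.toMonoidHom).map V.subtype).relIndex R ≠ 0 ∧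
        R.relIndex (((R.subgroupOf U).map φ.toMonoidHom).map V.subtype) ≠ 0 :=
  stmt_9_general R hRnormal hRclosed hRnilp hRmax
end

section
/- Let L be a topological group with trivial virtual center VZ(L) = {1}, and let G be an open compact subgroup of L that is a just-infinite profinite group. Then every nontrivial closed normal subgroup N of L is open in L. -/
/-!
If `N` meets `G` trivially, then for `n ∈ N` the commutator `g n g⁻¹ n⁻¹` lies in `N`, and for
`g` near `1` also in the open subgroup `G`; hence it is trivial, so `n` has an open centralizer and
`n = 1` because the virtual center is trivial. Otherwise `N ∩ G` is a nontrivial closed normal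
subgroup of the just-infinite group `G`, hence open in `G`, hence in `L`, and so is `N ⊇ N ∩ G`.
-/

namespace Subgroup

variable {L : Type*} [Group L] [TopologicalSpace L] [IsTopologicalGroup L] {N K : Subgroup L}

theorem Normal.isOpen_centralizer_of_disjoint (hN : N.Normal) (hK : IsOpen (K : Set L))
    (hNK : Disjoint N K) {n : L} (hn : n ∈ N) :
    IsOpen (centralizer {n} : Set L) := by
  let commutator : L → L := fun g ↦ g * n * g⁻¹ * n⁻¹
  have hopen : IsOpen (commutator ⁻¹' K) := hK.preimage (by fun_prop)
  have hone : (1 : L) ∈ commutator ⁻¹' K := by simp [commutator, K.one_mem]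
  refine isOpen_of_mem_nhds _ (Filter.mem_of_superset (hopen.mem_nhds hone) ?_)
  intro g hg
  have hcomm_mem : commutator g ∈ N := N.mul_mem (hN.conj_mem n hn g) (N.inv_mem hn)
  have hcomm : commutator g = 1 := (disjoint_def.mp hNK) hcomm_mem hg
  rw [SetLike.mem_coe, mem_centralizer_singleton_iff]
  calc g * n = commutator g * (n * g) := by simp only [commutator]; group
    _ = n * g := by rw [hcomm, one_mul]

theorem eq_bot_of_disjoint_of_isOpen
    (hVZ : ∀ g : L, IsOpen (centralizer {g} : Set L) → g = 1)
    (hN : N.Normal) (hK : IsOpen (K : Set L)) (hNK : Disjoint N K) : N = ⊥ :=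
  (eq_bot_iff_forall N).mpr fun _ hn ↦ hVZ _ (hN.isOpen_centralizer_of_disjoint hK hNK hn)

theorem isOpen_of_isOpen_subgroupOf (hK : IsOpen (K : Set L))
    (hNK : IsOpen (N.subgroupOf K : Set K)) : IsOpen (N : Set L) := by
  have himage : IsOpen (((↑) : K → L) '' (N.subgroupOf K : Set K)) :=
    hK.isOpenMap_subtype_val _ hNK
  refine isOpen_of_mem_nhds _ (Filter.mem_of_superset (himage.mem_nhds ⟨1, N.one_mem, rfl⟩) ?_)
  rintro _ ⟨g, hg, rfl⟩
  exact hg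

end Subgroup

theorem stmt_13_general {L : Type*} [Group L] [TopologicalSpace L] [IsTopologicalGroup L]
    (hVZ : ∀ g : L, IsOpen ((Subgroup.centralizer {g} : Subgroup L) : Set L) → g = 1)
    (G : Subgroup L) (hGopen : IsOpen (G : Set L))
    -- `G` is just-infinite: every nontrivial closed normal subgroup of `G` is open in `G`
    (hji : ∀ N : Subgroup G, N.Normal → IsClosed (N : Set G) → N ≠ ⊥ →
      IsOpen (N : Set G))
    (N : Subgroup L) (hN : N.Normal) (hNclosed : IsClosed (N : Set L)) (hNne : N ≠ ⊥) :
    IsOpen (N : Set L) := by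
  have hNG : ¬Disjoint N G := fun hNG ↦
    hNne (Subgroup.eq_bot_of_disjoint_of_isOpen hVZ hN hGopen hNG)
  refine Subgroup.isOpen_of_isOpen_subgroupOf hGopen (hji _ (hN.subgroupOf G) ?_ ?_)
  · exact hNclosed.preimage continuous_subtype_val
  · rwa [Ne, Subgroup.subgroupOf_eq_bot]

/-- Proposition 5.3: Let `L` be a topological group with trivial virtual center containing
an open compact subgroup `G` which is a just-infinite profinite group. Then every
nontrivial closed normal subgroup of `L` is open. -/
theorem stmt_13 {L : Type*} [Group L] [TopologicalSpace L] [IsTopologicalGroup L]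
    (hVZ : ∀ g : L, IsOpen ((Subgroup.centralizer {g} : Subgroup L) : Set L) → g = 1)
    (G : Subgroup L) (hGopen : IsOpen (G : Set L)) (hGcompact : IsCompact (G : Set L))
    (hGt2 : T2Space G) (hGtd : TotallyDisconnectedSpace G) (hGinf : Infinite G)
    -- `G` is just-infinite: every nontrivial closed normal subgroup of `G` is open in `G`
    (hji : ∀ N : Subgroup G, N.Normal → IsClosed (N : Set G) → N ≠ ⊥ →
      IsOpen (N : Set G))
    (N : Subgroup L) (hN : N.Normal) (hNclosed : IsClosed (N : Set L)) (hNne : N ≠ ⊥) :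
    IsOpen (N : Set L) :=
  stmt_13_general hVZ G hGopen hji N hN hNclosed hNne
end

section
/- Let G be a profinite group. The following are equivalent: (i) every open subgroup U of G has a countable base of neighborhoods of the identity consisting of open subgroups of U that are topologically characteristic in U (invariant under every topological group automorphism of U); (ii) G is second countable, and for every pair of open subgroups U and V of G with V ⊆ U, there exists an open subgroup W of G with W ⊆ V that is topologically characteristic in U. -/
/-!
Open subgroups of a compact totally disconnected group form a base at `1`. Under (i), `G` itself
has a countable base at `1`, so its uniformity is countably generated and the compact group `G`
is metrizable, hence second countable; a member of the base of `U` lying in `V` is the required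
`W`. Conversely, shrink each member of a countable base of `G` at `1` first to an open subgroup
of `U` and then, by (ii), to one that is characteristic in `U`; these subgroups still form a base
at `1` of `U`.
-/

open Filter Topology Uniformity

namespace Subgroup

variable {H : Type*} [Group H] [TopologicalSpace H]

def IsTopCharacteristic (W : Subgroup H) : Prop :=
  ∀ φ : H ≃* H, Continuous φ → Continuous φ.symm → W.map φ.toMonoidHom = W

end Subgroup

def CountablyCharacteristicallyBased (H : Type*) [Group H] [TopologicalSpace H] : Prop :=
  ∃ B : ℕ → Subgroup H, (∀ n, IsOpen (B n : Set H)) ∧ (∀ n, (B n).IsTopCharacteristic) ∧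
    ∀ s ∈ 𝓝 (1 : H), ∃ n, (B n : Set H) ⊆ s

open Subgroup

theorem Filter.HasBasis.of_forall_mem_exists_subset {α : Type*} {ι : Sort*} {f : Filter α}
    {s : ι → Set α} (hmem : ∀ i, s i ∈ f) (hbasis : ∀ t ∈ f, ∃ i, s i ⊆ t) :
    f.HasBasis (fun _ => True) s :=
  ⟨fun t => ⟨fun ht => (hbasis t ht).imp fun _ hi => ⟨trivial, hi⟩,
    fun ⟨i, _, hi⟩ => mem_of_superset (hmem i) hi⟩⟩

section TopologicalGroup

variable {G : Type*} [Group G] [TopologicalSpace G]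

theorem CountablyCharacteristicallyBased.isCountablyGenerated_nhds_one
    (h : CountablyCharacteristicallyBased G) : (𝓝 (1 : G)).IsCountablyGenerated := by
  obtain ⟨B, hBopen, -, hB⟩ := h
  exact (HasBasis.of_forall_mem_exists_subset (fun n => (hBopen n).mem_nhds (B n).one_mem)
    hB).isCountablyGenerated

theorem isCountablyGenerated_nhds_one_of_isOpen {U : Subgroup G} (hU : IsOpen (U : Set G))
    [(𝓝 (1 : U)).IsCountablyGenerated] : (𝓝 (1 : G)).IsCountablyGenerated := by
  have hmap : map ((↑) : U → G) (𝓝 1) = 𝓝 1 := hU.isOpenEmbedding_subtypeVal.map_nhds_eq 1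
  rw [← hmap]
  infer_instance

theorem secondCountableTopology_of_isCountablyGenerated_nhds_one [IsTopologicalGroup G]
    [CompactSpace G] [T0Space G] [(𝓝 (1 : G)).IsCountablyGenerated] :
    SecondCountableTopology G := by
  let := IsTopologicalGroup.rightUniformSpace G
  have : (𝓤 G).IsCountablyGenerated := by
    rw [uniformity_eq_comap_nhds_one']
    infer_instance
  have := UniformSpace.metrizableSpace (X := G)
  infer_instance

theorem Subgroup.isOpen_map_subtype {U : Subgroup G} (hU : IsOpen (U : Set G)) {B : Subgroup U}
    (hB : IsOpen (B : Set U)) : IsOpen (B.map U.subtype : Set G) :=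
  hU.isOpenMap_subtype_val _ hB

theorem CountablyCharacteristicallyBased.exists_isOpen_le_isTopCharacteristic
    {U V : Subgroup G} (hU : IsOpen (U : Set G)) (hV : IsOpen (V : Set G))
    (h : CountablyCharacteristicallyBased U) :
    ∃ W : Subgroup G, IsOpen (W : Set G) ∧ W ≤ V ∧ (W.subgroupOf U).IsTopCharacteristic := by
  obtain ⟨B, hBopen, hBchar, hB⟩ := h
  obtain ⟨n, hn⟩ := hB _ ((subgroupOf_isOpen U V hV).mem_nhds (V.subgroupOf U).one_mem)
  refine ⟨(B n).map U.subtype, isOpen_map_subtype hU (hBopen n), ?_, ?_⟩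
  · rintro - ⟨x, hx, rfl⟩
    exact hn hx
  · rw [subgroupOf, comap_map_eq_self_of_injective U.subtype_injective]
    exact hBchar n

theorem Subgroup.forall_mem_nhds_one_exists_subgroupOf_subset {ι : Sort*} {U : Subgroup G}
    {W : ι → Subgroup G} (hW : ∀ t ∈ 𝓝 (1 : G), ∃ i, (W i : Set G) ⊆ t) :
    ∀ t ∈ 𝓝 (1 : U), ∃ i, ((W i).subgroupOf U : Set U) ⊆ t := by
  intro t ht
  rw [nhds_subtype] at ht
  obtain ⟨t', ht', hsub⟩ := ht
  obtain ⟨i, hi⟩ := hW t' ht'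
  exact ⟨i, fun x hx => hsub (hi hx)⟩

variable [IsTopologicalGroup G] [CompactSpace G] [TotallyDisconnectedSpace G]

theorem exists_isOpen_subgroup_subset {s : Set G} (hs : s ∈ 𝓝 1) :
    ∃ W : Subgroup G, IsOpen (W : Set G) ∧ (W : Set G) ⊆ s := by
  obtain ⟨t, hts, ht, h1t⟩ := mem_nhds_iff.mp hs
  obtain ⟨N, hN⟩ := ProfiniteGrp.exist_openNormalSubgroup_sub_open_nhds_of_one ht h1t
  exact ⟨N.toSubgroup, N.isOpen, hN.trans hts⟩

theorem countablyCharacteristicallyBased_of_exists_isTopCharacteristic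
    [(𝓝 (1 : G)).IsCountablyGenerated] {U : Subgroup G} (hU : IsOpen (U : Set G))
    (hchar : ∀ V : Subgroup G, IsOpen (V : Set G) → V ≤ U →
      ∃ W : Subgroup G, IsOpen (W : Set G) ∧ W ≤ V ∧ (W.subgroupOf U).IsTopCharacteristic) :
    CountablyCharacteristicallyBased U := by
  have hsmall : ∀ s ∈ 𝓝 (1 : G), ∃ W : Subgroup G, IsOpen (W : Set G) ∧ (W : Set G) ⊆ s ∧
      (W.subgroupOf U).IsTopCharacteristic := by
    intro s hs
    obtain ⟨V, hV, hVs⟩ := exists_isOpen_subgroup_subset (inter_mem hs (hU.mem_nhds U.one_mem))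
    obtain ⟨W, hW, hWV, hWchar⟩ := hchar V hV fun x hx => (hVs hx).2
    exact ⟨W, hW, fun x hx => (hVs (hWV hx)).1, hWchar⟩
  obtain ⟨s, hs⟩ := (𝓝 (1 : G)).exists_antitone_basis
  choose W hW hWs hWchar using fun n => hsmall (s n) (hs.mem n)
  refine ⟨fun n => (W n).subgroupOf U, fun n => subgroupOf_isOpen U _ (hW n), hWchar, ?_⟩
  exact forall_mem_nhds_one_exists_subgroupOf_subset fun t ht =>
    (hs.mem_iff.mp ht).imp fun n hn => (hWs n).trans hn

end TopologicalGroup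

theorem stmt_16_general {G : Type*} [Group G] [TopologicalSpace G] [IsTopologicalGroup G]
    [CompactSpace G] [TotallyDisconnectedSpace G] :
    (∀ U : Subgroup G, IsOpen (U : Set G) →
      ∃ B : ℕ → Subgroup U,
        (∀ n, IsOpen ((B n : Subgroup U) : Set U)) ∧
        (∀ n (φ : U ≃* U), Continuous φ → Continuous φ.symm →
          (B n).map φ.toMonoidHom = B n) ∧
        (∀ s ∈ nhds (1 : U), ∃ n, ((B n : Subgroup U) : Set U) ⊆ s)) ↔
    (SecondCountableTopology G ∧
      ∀ U V : Subgroup G, IsOpen (U : Set G) → IsOpen (V : Set G) → V ≤ U →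
        ∃ W : Subgroup G, IsOpen (W : Set G) ∧ W ≤ V ∧
          ∀ φ : U ≃* U, Continuous φ → Continuous φ.symm →
            (W.subgroupOf U).map φ.toMonoidHom = W.subgroupOf U) := by
  refine ⟨fun h => ⟨?_, fun U V hU hV _ => ?_⟩, fun ⟨_, hchar⟩ U hU => ?_⟩
  · have htop : IsOpen ((⊤ : Subgroup G) : Set G) := isOpen_univ
    have := CountablyCharacteristicallyBased.isCountablyGenerated_nhds_one (h ⊤ htop)
    have := isCountablyGenerated_nhds_one_of_isOpen htop
    exact secondCountableTopology_of_isCountablyGenerated_nhds_one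
  · exact CountablyCharacteristicallyBased.exists_isOpen_le_isTopCharacteristic hU hV (h U hU)
  · exact countablyCharacteristicallyBased_of_exists_isTopCharacteristic hU (hchar U · hU)

/-- Proposition 7.1: A profinite group `G` is hereditarily countably characteristically
based (every open subgroup has a countable neighborhood base at the identity consisting
of open topologically characteristic subgroups) iff `G` is second countable and for all
open subgroups `V ⊆ U` of `G` there is an open subgroup `W ⊆ V` which is topologically
characteristic in `U`. -/
theorem stmt_16 {G : Type*} [Group G] [TopologicalSpace G] [IsTopologicalGroup G]
    [CompactSpace G] [T2Space G] [TotallyDisconnectedSpace G] :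
    (∀ U : Subgroup G, IsOpen (U : Set G) →
      ∃ B : ℕ → Subgroup U,
        (∀ n, IsOpen ((B n : Subgroup U) : Set U)) ∧
        (∀ n (φ : U ≃* U), Continuous φ → Continuous φ.symm →
          (B n).map φ.toMonoidHom = B n) ∧
        (∀ s ∈ nhds (1 : U), ∃ n, ((B n : Subgroup U) : Set U) ⊆ s)) ↔
    (SecondCountableTopology G ∧
      ∀ U V : Subgroup G, IsOpen (U : Set G) → IsOpen (V : Set G) → V ≤ U →
        ∃ W : Subgroup G, IsOpen (W : Set G) ∧ W ≤ V ∧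
          ∀ φ : U ≃* U, Continuous φ → Continuous φ.symm →
            (W.subgroupOf U).map φ.toMonoidHom = W.subgroupOf U) :=
  stmt_16_general
end

section
/- Let L be a topological group with trivial virtual center VZ(L) = {1}, and let G be an open compact subgroup of L that is a just-infinite profinite group. Suppose Δ is a subgroup of L such that: Δ is simple as an abstract group; Δ is finitely generated as an abstract group; Δ ∩ G is dense in G; and L is generated as an abstract group by Δ ∪ G. Then L is topologically simple (its only closed normal subgroups are {1} and L) and L is compactly generated (generated as a group by a compact subset). -/
/-!
A nontrivial normal subgroup `N` of `L` meeting the open subgroup `G` trivially would consist of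
elements with open centralizer (conjugating `n ∈ N` by `g` near `1` moves it by an element of
`N ⊓ G`), so trivial virtual center forces `N ⊓ G ≠ ⊥`. If `N` is also closed, just-infiniteness
of `G` makes `N ⊓ G`, hence `N`, open. An open subgroup meets the dense subgroup `Δ` nontrivially,
so `N` contains the simple group `Δ`, hence also `G ⊆ closure Δ`, hence `⟨Δ, G⟩ = L`. Compact
generation is immediate: a finite generating set of `Δ` together with `G` generates `L`.
-/

namespace Subgroup

section TopologicalGroup

variable {L : Type*} [Group L] [TopologicalSpace L] [IsTopologicalGroup L]

theorem isOpen_centralizer_of_inf_eq_bot {N G : Subgroup L} (hN : N.Normal)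
    (hG : IsOpen (G : Set L)) (hNG : N ⊓ G = ⊥) {n : L} (hn : n ∈ N) :
    IsOpen (centralizer {n} : Set L) := by
  let commutatorWith : L → L := fun g => g * n * g⁻¹ * n⁻¹
  have hU : IsOpen (commutatorWith ⁻¹' G) := hG.preimage (by fun_prop)
  have h1U : (1 : L) ∈ commutatorWith ⁻¹' G := by simp [commutatorWith]
  refine isOpen_of_mem_nhds _ (Filter.mem_of_superset (hU.mem_nhds h1U) fun g hg => ?_)
  have hmem : commutatorWith g ∈ N ⊓ G :=
    ⟨N.mul_mem (hN.conj_mem n hn g) (N.inv_mem hn), hg⟩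
  rw [hNG, mem_bot, mul_inv_eq_one] at hmem
  exact mem_centralizer_singleton_iff.mpr (mul_inv_eq_iff_eq_mul.mp hmem)

theorem inf_ne_bot_of_normal_of_virtualCenter_eq_bot
    (hVZ : ∀ g : L, IsOpen (centralizer {g} : Set L) → g = 1)
    {N G : Subgroup L} (hN : N.Normal) (hN' : N ≠ ⊥) (hG : IsOpen (G : Set L)) :
    N ⊓ G ≠ ⊥ := fun hNG => by
  obtain ⟨n, hn, hn1⟩ := N.bot_or_exists_ne_one.resolve_left hN'
  exact hn1 (hVZ n (isOpen_centralizer_of_inf_eq_bot hN hG hNG hn))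

theorem isOpen_of_isOpen_subgroupOf_s19 {N G : Subgroup L} (hG : IsOpen (G : Set L))
    (hNG : IsOpen (N.subgroupOf G : Set G)) : IsOpen (N : Set L) := by
  have hopen : IsOpen ((G : Set L) ∩ N) := by
    rw [← Subtype.image_preimage_coe]
    exact hG.isOpenMap_subtype_val _ hNG
  exact isOpen_of_mem_nhds _ (Filter.mem_of_superset
    (hopen.mem_nhds ⟨G.one_mem, N.one_mem⟩) Set.inter_subset_right)

theorem t1Space_of_isOpen {G : Subgroup L} (hG : IsOpen (G : Set L)) [T1Space G] :
    T1Space L := by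
  refine IsTopologicalGroup.t1Space L ?_
  have h := (G.isClosed_of_isOpen hG).isClosedEmbedding_subtypeVal.isClosedMap _
    (isClosed_singleton (x := (1 : G)))
  rwa [Set.image_singleton] at h

end TopologicalGroup

theorem inf_ne_bot_of_isOpen_s19 {L : Type*} [Group L] [TopologicalSpace L] [T1Space L]
    {N H : Subgroup L} (hN : IsOpen (N : Set L)) {x : L} (hxN : x ∈ N) (hx1 : x ≠ 1)
    (hxH : x ∈ _root_.closure (H : Set L)) : N ⊓ H ≠ ⊥ := by
  obtain ⟨y, ⟨hyN, hy1⟩, hyH⟩ :=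
    mem_closure_iff.mp hxH _ (hN.inter isOpen_ne) (⟨hxN, hx1⟩ : x ∈ (N : Set L) ∩ {y | y ≠ 1})
  exact ne_bot_iff_exists_ne_one.mpr ⟨⟨y, hyN, hyH⟩, fun h => hy1 congr($h.1)⟩

theorem le_of_inf_ne_bot_of_isSimpleGroup {L : Type*} [Group L] {N Δ : Subgroup L}
    [IsSimpleGroup Δ] (hN : N.Normal) (hNΔ : N ⊓ Δ ≠ ⊥) : Δ ≤ N := by
  rcases IsSimpleGroup.eq_bot_or_eq_top_of_normal _ (hN.subgroupOf Δ) with h | h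
  · exact absurd (disjoint_iff.mp (subgroupOf_eq_bot.mp h)) hNΔ
  · exact subgroupOf_eq_top.mp h

theorem exists_isCompact_closure_eq_sup {L : Type*} [Group L] [TopologicalSpace L]
    {Δ G : Subgroup L} (hΔ : Δ.FG) (hG : IsCompact (G : Set L)) :
    ∃ K : Set L, IsCompact K ∧ closure K = Δ ⊔ G := by
  obtain ⟨S, rfl⟩ := hΔ
  exact ⟨S ∪ G, S.finite_toSet.isCompact.union hG, by rw [closure_union, closure_eq]⟩

end Subgroup

theorem stmt_19_general {L : Type*} [Group L] [TopologicalSpace L] [IsTopologicalGroup L]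
    (hVZ : ∀ g : L, IsOpen ((Subgroup.centralizer {g} : Subgroup L) : Set L) → g = 1)
    (G : Subgroup L) (hGopen : IsOpen (G : Set L)) (hGcompact : IsCompact (G : Set L))
    (hGt2 : T2Space G)
    -- `G` is just-infinite
    (hji : ∀ N : Subgroup G, N.Normal → IsClosed (N : Set G) → N ≠ ⊥ →
      IsOpen (N : Set G))
    (Δ : Subgroup L)
    (hΔsimple : IsSimpleGroup Δ)
    (hΔfg : Δ.FG)
    -- `Δ ∩ G` is dense in `G`
    (hdense : (G : Set L) ⊆ closure ((Δ ⊓ G : Subgroup L) : Set L))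
    -- `L` is generated (as an abstract group) by `Δ ∪ G`
    (hgen : Δ ⊔ G = ⊤) :
    Nontrivial L ∧
    (∀ N : Subgroup L, N.Normal → IsClosed (N : Set L) → N = ⊥ ∨ N = ⊤) ∧
    ∃ K : Set L, IsCompact K ∧ Subgroup.closure K = ⊤ := by
  refine ⟨Subtype.val_injective.nontrivial (α := Δ), fun N hN hNc => ?_,
    hgen ▸ Subgroup.exists_isCompact_closure_eq_sup hΔfg hGcompact⟩
  refine (eq_or_ne N ⊥).imp_right fun hN' => ?_
  have hNG := Subgroup.inf_ne_bot_of_normal_of_virtualCenter_eq_bot hVZ hN hN' hGopen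
  have hNopen : IsOpen (N : Set L) := Subgroup.isOpen_of_isOpen_subgroupOf_s19 hGopen <|
    hji _ (hN.subgroupOf G) (hNc.preimage continuous_subtype_val)
      (by rwa [Ne, Subgroup.subgroupOf_eq_bot, disjoint_iff])
  have : T1Space L := Subgroup.t1Space_of_isOpen hGopen
  have hGΔ : (G : Set L) ⊆ closure Δ := hdense.trans (closure_mono inf_le_left)
  obtain ⟨x, ⟨hxN, hxG⟩, hx1⟩ := (N ⊓ G).bot_or_exists_ne_one.resolve_left hNG
  have hΔN : Δ ≤ N := Subgroup.le_of_inf_ne_bot_of_isSimpleGroup hN <|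
    Subgroup.inf_ne_bot_of_isOpen_s19 hNopen hxN hx1 (hGΔ hxG)
  have hGN : G ≤ N := fun _ hg => closure_minimal hΔN hNc (hGΔ hg)
  exact top_unique (hgen ▸ sup_le hΔN hGN)

/-- Abstraction of the proof of Theorem 4.8: if `L` has trivial virtual center, an open
compact just-infinite profinite subgroup `G`, and a finitely generated abstractly simple
subgroup `Δ` with `Δ ∩ G` dense in `G` and `⟨Δ, G⟩ = L`, then `L` is topologically simple
and compactly generated. -/
theorem stmt_19 {L : Type*} [Group L] [TopologicalSpace L] [IsTopologicalGroup L]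
    (hVZ : ∀ g : L, IsOpen ((Subgroup.centralizer {g} : Subgroup L) : Set L) → g = 1)
    (G : Subgroup L) (hGopen : IsOpen (G : Set L)) (hGcompact : IsCompact (G : Set L))
    (hGt2 : T2Space G) (hGtd : TotallyDisconnectedSpace G) (hGinf : Infinite G)
    -- `G` is just-infinite
    (hji : ∀ N : Subgroup G, N.Normal → IsClosed (N : Set G) → N ≠ ⊥ →
      IsOpen (N : Set G))
    (Δ : Subgroup L)
    (hΔsimple : IsSimpleGroup Δ)
    (hΔfg : Δ.FG)
    -- `Δ ∩ G` is dense in `G`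
    (hdense : (G : Set L) ⊆ closure ((Δ ⊓ G : Subgroup L) : Set L))
    -- `L` is generated (as an abstract group) by `Δ ∪ G`
    (hgen : Δ ⊔ G = ⊤) :
    Nontrivial L ∧
    (∀ N : Subgroup L, N.Normal → IsClosed (N : Set L) → N = ⊥ ∨ N = ⊤) ∧
    ∃ K : Set L, IsCompact K ∧ Subgroup.closure K = ⊤ :=
  stmt_19_general hVZ G hGopen hGcompact hGt2 hji Δ hΔsimple hΔfg hdense hgen
end
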